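/- arXiv:1308.6390 — 4 statements merged into one kernel-verified Lean document; each statement's English description precedes it below -/
import Mathlib

section
/- If p ∈ P(k,k) is a projective partition and N ≥ 1, then the normalized map T_p = N^{−β(p)/2} T̊_p is an orthogonal projection on (ℂ^N)^{⊗k}; more generally, for any p ∈ P(k,l), T_p is a partial isometry with T_p T_p* = T_{pp*} and T_p* T_p = T_{p*p}. -/
/-- A two-row partition with `k` upper and `l` lower points, encoded as the
equivalence relation whose classes are the blocks. -/
abbrev PP (k l : ℕ) := Setoid (Fin k ⊕ Fin l)

/-- The involution `p*` (turning `p` upside down). -/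
def swapP {k l : ℕ} (p : PP k l) : PP l k := Setoid.comap Sum.swap p

/-- Disjoint union of two setoids. -/
def sumSetoid {α β : Type*} (s : Setoid α) (t : Setoid β) : Setoid (α ⊕ β) where
  r := Sum.LiftRel s.r t.r
  iseqv := by
    refine ⟨fun x => ?_, fun {x y} h => ?_, fun {x y z} h1 h2 => ?_⟩
    · cases x with
      | inl a => exact Sum.LiftRel.inl (s.iseqv.refl a)
      | inr b => exact Sum.LiftRel.inr (t.iseqv.refl b)
    · cases h with
      | inl h => exact Sum.LiftRel.inl (s.iseqv.symm h)
      | inr h => exact Sum.LiftRel.inr (t.iseqv.symm h)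
    · cases h1 with
      | inl h1 =>
        cases h2 with
        | inl h2 => exact Sum.LiftRel.inl (s.iseqv.trans h1 h2)
      | inr h1 =>
        cases h2 with
        | inr h2 => exact Sum.LiftRel.inr (t.iseqv.trans h1 h2)

/-- Reindexing equivalence for the horizontal concatenation (tensor product). -/
def tensorEquiv (k l k' l' : ℕ) :
    (Fin (k + k') ⊕ Fin (l + l')) ≃ ((Fin k ⊕ Fin l) ⊕ (Fin k' ⊕ Fin l')) :=
  (Equiv.sumCongr finSumFinEquiv.symm finSumFinEquiv.symm).trans
    (Equiv.sumSumSumComm (Fin k) (Fin k') (Fin l) (Fin l'))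

/-- Tensor product (horizontal concatenation) of partitions. -/
def tensorP {k l k' l' : ℕ} (p : PP k l) (q : PP k' l') : PP (k + k') (l + l') :=
  Setoid.comap (tensorEquiv k l k' l') (sumSetoid p q)

/-- The relation on `k ⊔ l ⊔ m` points generated by `p` (upper part) and `q` (lower part). -/
def midRel {k l m : ℕ} (p : PP k l) (q : PP l m) :
    (Fin k ⊕ (Fin l ⊕ Fin m)) → (Fin k ⊕ (Fin l ⊕ Fin m)) → Prop := fun x y =>
  (∃ a b : Fin k ⊕ Fin l, p.r a b ∧ x = Sum.map id Sum.inl a ∧ y = Sum.map id Sum.inl b) ∨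
  (∃ a b : Fin l ⊕ Fin m, q.r a b ∧ x = Sum.inr a ∧ y = Sum.inr b)

/-- The equivalence relation generated on `k ⊔ l ⊔ m` in the composition procedure. -/
def bigS {k l m : ℕ} (p : PP k l) (q : PP l m) : Setoid (Fin k ⊕ (Fin l ⊕ Fin m)) :=
  Relation.EqvGen.setoid (midRel p q)

/-- `compP q p` is the vertical composition `qp` (apply `p : P(k,l)` first, then `q : P(l,m)`). -/
def compP {k l m : ℕ} (q : PP l m) (p : PP k l) : PP k m :=
  Setoid.comap (Sum.map id Sum.inr) (bigS p q)

/-- `rlP q p` : the number of closed loops removed in the composition `qp`,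
i.e. the blocks of the generated relation consisting only of middle points. -/
noncomputable def rlP {k l m : ℕ} (q : PP l m) (p : PP k l) : ℕ :=
  Nat.card {c : Quotient (bigS p q) //
    ∀ x, Quotient.mk (bigS p q) x = c → ∃ b : Fin l, x = Sum.inr (Sum.inl b)}

/-- `b(p)` : number of blocks. -/
noncomputable def bP {k l : ℕ} (p : PP k l) : ℕ := Nat.card (Quotient p)

/-- `t(p)` : number of through-blocks (blocks meeting both rows). -/
noncomputable def tP {k l : ℕ} (p : PP k l) : ℕ :=
  Nat.card {c : Quotient p // (∃ a : Fin k, Quotient.mk p (Sum.inl a) = c) ∧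
    (∃ b : Fin l, Quotient.mk p (Sum.inr b) = c)}

/-- `β(p) = b(p) - t(p)` : number of non-through-blocks. -/
noncomputable def betaP {k l : ℕ} (p : PP k l) : ℕ := bP p - tP p

/-- The identity partition `|^{⊗k}`. -/
def idP (k : ℕ) : PP k k := Setoid.ker (Sum.elim (fun i : Fin k => i) (fun i : Fin k => i))

/-- A pair partition: all blocks have size two. -/
def isPair {k l : ℕ} (p : PP k l) : Prop := ∀ x, Nat.card {y // p.r x y} = 2

/-- A through-partition: a pair partition each of whose blocks connects exactly one
upper point to exactly one lower point. -/
def isThrough {k : ℕ} (p : PP k k) : Prop :=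
  isPair p ∧ (∀ a b : Fin k, p.r (Sum.inl a) (Sum.inl b) → a = b) ∧
    (∀ a b : Fin k, p.r (Sum.inr a) (Sum.inr b) → a = b)

/-- A building partition. -/
def isBuilding {k l : ℕ} (p : PP k l) : Prop :=
  (∀ b b' : Fin l, p.r (Sum.inr b) (Sum.inr b') → b = b') ∧
  (∀ b : Fin l, ∃ a : Fin k, p.r (Sum.inl a) (Sum.inr b)) ∧
  (∀ b b' : Fin l, ∀ a a' : Fin k, b < b' →
    IsLeast {x : Fin k | p.r (Sum.inl x) (Sum.inr b)} a →
    IsLeast {x : Fin k | p.r (Sum.inl x) (Sum.inr b')} a' → a < a')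

/-- A projective partition: symmetric and idempotent. -/
def isProjective {k : ℕ} (p : PP k k) : Prop := swapP p = p ∧ compP p p = p

/-- Linear position of the points, reading the upper row left to right and then the
lower row right to left. -/
def posP (k l : ℕ) : Fin k ⊕ Fin l → ℕ :=
  Sum.elim (fun i => (i : ℕ)) (fun j => k + (l - 1 - (j : ℕ)))

/-- Noncrossing partitions. -/
def isNC {k l : ℕ} (p : PP k l) : Prop :=
  ¬ ∃ x1 x2 x3 x4 : Fin k ⊕ Fin l,
    posP k l x1 < posP k l x2 ∧ posP k l x2 < posP k l x3 ∧ posP k l x3 < posP k l x4 ∧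
    p.r x1 x3 ∧ p.r x2 x4 ∧ ¬ p.r x1 x2

open scoped Classical in
/-- The (unnormalized) linear map `T̊_p` associated to a partition, as a matrix. -/
noncomputable def Tmat0 {k l : ℕ} (N : ℕ) (p : PP k l) :
    Matrix (Fin l → Fin N) (Fin k → Fin N) ℂ :=
  fun j i => if (∀ x y, p.r x y → Sum.elim i j x = Sum.elim i j y) then 1 else 0

/-- The normalized map `T_p = N^{-β(p)/2} T̊_p`. -/
noncomputable def TmatN {k l : ℕ} (N : ℕ) (p : PP k l) :
    Matrix (Fin l → Fin N) (Fin k → Fin N) ℂ :=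
  ((N : ℂ) ^ (-(betaP p : ℂ) / 2)) • Tmat0 N p

/-! ### Auxiliary development -/

section Aux

open scoped Classical in
theorem master {X : Type*} [Fintype X] (M : ℕ) (S : Setoid X) (O : X → Prop) (f : X → Fin M) :
    Nat.card {c : X → Fin M // (∀ x y, S.r x y → c x = c y) ∧ ∀ x, O x → c x = f x}
      = if (∀ x y, S.r x y → O x → O y → f x = f y)
        then M ^ Nat.card {B : Quotient S // ∀ x, Quotient.mk S x = B → ¬ O x} else 0 := by
  classical
  split_ifs with hcons
  · set Loop : Quotient S → Prop := fun B => ∀ x, Quotient.mk S x = B → ¬ O x with hLoop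
    have hout : ∀ B : Quotient S, ¬ Loop B → ∃ x, Quotient.mk S x = B ∧ O x := by
      intro B hB
      simp only [hLoop, not_forall, not_not] at hB
      obtain ⟨x, hx, hOx⟩ := hB
      exact ⟨x, hx, hOx⟩
    choose pt hpt hptO using hout
    let F : ({B : Quotient S // Loop B} → Fin M) → Quotient S → Fin M := fun g B =>
      if h : Loop B then g ⟨B, h⟩ else f (pt B h)
    have e : {c : X → Fin M // (∀ x y, S.r x y → c x = c y) ∧ ∀ x, O x → c x = f x}
        ≃ ({B : Quotient S // Loop B} → Fin M) := by
      refine ⟨fun c B => c.1 B.1.out, fun g => ⟨fun x => F g (Quotient.mk S x), ?_, ?_⟩, ?_, ?_⟩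
      · intro x y hxy
        exact congrArg (F g) (Quotient.sound hxy)
      · intro x hOx
        have hnl : ¬ Loop (Quotient.mk S x) := fun h => h x rfl hOx
        show F g _ = f x
        rw [show F g (Quotient.mk S x) = f (pt _ hnl) from dif_neg hnl]
        exact hcons _ _ (Quotient.exact (hpt _ hnl)) (hptO _ hnl) hOx
      · rintro ⟨c, hr, ha⟩
        apply Subtype.ext; funext x
        simp only [F]
        by_cases h : Loop (Quotient.mk S x)
        · rw [dif_pos h]
          exact hr _ _ (Quotient.exact (Quotient.out_eq _))
        · rw [dif_neg h, ← ha _ (hptO _ h)]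
          exact hr _ _ (Quotient.exact (hpt _ h))
      · intro g
        funext B
        obtain ⟨B, hB⟩ := B
        simp only [F]
        have h1 : Quotient.mk S B.out = B := Quotient.out_eq _
        rw [h1, dif_pos hB]
    rw [Nat.card_congr e, Nat.card_fun, Nat.card_eq_fintype_card, Fintype.card_fin]
  · rw [Nat.card_eq_zero]
    left
    constructor
    rintro ⟨c, hr, ha⟩
    push_neg at hcons
    obtain ⟨x, y, hxy, hOx, hOy, hne⟩ := hcons
    exact hne (by rw [← ha x hOx, ← ha y hOy]; exact hr _ _ hxy)

lemma sum_ite_count {I : Type*} [Fintype I] (P : I → Prop) [DecidablePred P] :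
    (∑ x : I, if P x then (1:ℂ) else 0) = (Nat.card {x // P x} : ℂ) := by
  classical
  rw [Finset.sum_boole, Nat.card_eq_fintype_card, Fintype.card_subtype]

lemma forall_eqvGen_iff {X α : Type*} (r : X → X → Prop) (c : X → α) :
    (∀ x y, Relation.EqvGen r x y → c x = c y) ↔ ∀ x y, r x y → c x = c y := by
  constructor
  · intro h x y hxy; exact h x y (Relation.EqvGen.rel _ _ hxy)
  · intro h x y hxy
    induction hxy with
    | rel a b hab => exact h _ _ hab
    | refl a => rfl
    | symm a b _ ih => exact ih.symm
    | trans a b c _ _ ih1 ih2 => exact ih1.trans ih2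

variable {k l m : ℕ}

lemma ite_congr' {c1 c2 : Prop} [Decidable c1] [Decidable c2] (h : c1 ↔ c2) (x y : ℂ) :
    (if c1 then x else y) = if c2 then x else y := by
  by_cases h1 : c1
  · rw [if_pos h1, if_pos (h.mp h1)]
  · rw [if_neg h1, if_neg fun hc => h1 (h.mpr hc)]

lemma swapP_r (p : PP k l) (x y : Fin l ⊕ Fin k) :
    (swapP p).r x y ↔ p.r (Sum.swap x) (Sum.swap y) := Iff.rfl

lemma swapP_swapP (p : PP k l) : swapP (swapP p) = p := by
  apply Setoid.ext
  intro x y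
  rw [swapP_r, swapP_r, Sum.swap_swap, Sum.swap_swap]

lemma elim_swap {α β γ : Type*} (f : α → γ) (g : β → γ) (x : α ⊕ β) :
    Sum.elim g f (Sum.swap x) = Sum.elim f g x := by cases x <;> rfl

lemma Tmat0_swap (M : ℕ) (p : PP k l) (a : Fin k → Fin M) (b : Fin l → Fin M) :
    Tmat0 M (swapP p) a b = Tmat0 M p b a := by
  classical
  unfold Tmat0
  refine ite_congr' ?_ _ _
  constructor
  · intro h x y hxy
    have := h (Sum.swap x) (Sum.swap y) (by rw [swapP_r, Sum.swap_swap, Sum.swap_swap]; exact hxy)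
    rwa [elim_swap, elim_swap] at this
  · intro h x y hxy
    rw [← elim_swap b a x, ← elim_swap b a y]
    exact h _ _ hxy

lemma Tmat0_conjT (M : ℕ) (p : PP k l) :
    (Tmat0 M p).conjTranspose = Tmat0 M (swapP p) := by
  ext a b
  rw [Matrix.conjTranspose_apply, Tmat0_swap]
  unfold Tmat0
  split <;> simp

lemma Tmat0_const (M : ℕ) (p : PP k l) (v : Fin M) :
    Tmat0 M p (fun _ => v) (fun _ => v) = 1 := by
  unfold Tmat0
  rw [if_pos]
  intro x y _
  cases x <;> cases y <;> rfl

lemma Tmat0_idem (M : ℕ) (p : PP k l) (a : Fin l → Fin M) (b : Fin k → Fin M) :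
    Tmat0 M p a b * Tmat0 M p a b = Tmat0 M p a b := by
  unfold Tmat0; split <;> simp

end Aux
section Aux2
variable {k l m : ℕ}

/-- number of blocks contained in the lower row -/
noncomputable def loP {k l : ℕ} (p : PP k l) : ℕ :=
  Nat.card {B : Quotient p // ∀ x, Quotient.mk p x = B → ∃ b : Fin l, x = Sum.inr b}

open scoped Classical in
lemma rowsum (M : ℕ) (hM : 0 < M) (p : PP k l) (i : Fin k → Fin M) :
    (∑ j : Fin l → Fin M, Tmat0 M p j i)
      = if (∀ a b : Fin k, p.r (Sum.inl a) (Sum.inl b) → i a = i b)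
        then (M:ℂ) ^ (loP p) else 0 := by
  classical
  set O : Fin k ⊕ Fin l → Prop := fun x => ∃ a : Fin k, x = Sum.inl a with hO
  set f : Fin k ⊕ Fin l → Fin M := Sum.elim i (fun _ => ⟨0, hM⟩) with hf
  have key := master M p O f
  have h1 : ∀ j : Fin l → Fin M, Tmat0 M p j i
      = if ((∀ x y, p.r x y → Sum.elim i j x = Sum.elim i j y) ∧
            ∀ x, O x → Sum.elim i j x = f x) then (1:ℂ) else 0 := by
    intro j
    unfold Tmat0
    refine ite_congr' ?_ _ _
    constructor
    · intro h
      refine ⟨h, ?_⟩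
      rintro x ⟨a, rfl⟩
      rfl
    · exact fun h => h.1
  rw [Finset.sum_congr rfl (fun j _ => h1 j), sum_ite_count]
  have hrec : ∀ c : {c : Fin k ⊕ Fin l → Fin M //
      (∀ x y, p.r x y → c x = c y) ∧ ∀ x, O x → c x = f x},
      Sum.elim i (fun b => c.1 (Sum.inr b)) = c.1 := by
    rintro ⟨c, hr, ha⟩
    funext x
    cases x with
    | inl a => exact (ha _ ⟨a, rfl⟩).symm
    | inr b => rfl
  have e : {j : Fin l → Fin M // (∀ x y, p.r x y → Sum.elim i j x = Sum.elim i j y) ∧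
        ∀ x, O x → Sum.elim i j x = f x}
      ≃ {c : Fin k ⊕ Fin l → Fin M // (∀ x y, p.r x y → c x = c y) ∧ ∀ x, O x → c x = f x} :=
    ⟨fun j => ⟨Sum.elim i j.1, j.2⟩,
     fun c => ⟨fun b => c.1 (Sum.inr b), by rw [hrec c]; exact c.2⟩,
     fun j => rfl, fun c => Subtype.ext (hrec c)⟩
  rw [Nat.card_congr e, key]
  have hcard : Nat.card {B : Quotient p // ∀ x, Quotient.mk p x = B → ¬ O x} = loP p := by
    refine Nat.card_congr (Equiv.subtypeEquivRight ?_)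
    intro B
    refine forall_congr' fun x => forall_congr' fun _ => ?_
    cases x with
    | inl a => simp [hO]
    | inr b => simp [hO]
  rw [hcard]
  have hcond : (∀ x y, p.r x y → O x → O y → f x = f y)
      ↔ ∀ a b : Fin k, p.r (Sum.inl a) (Sum.inl b) → i a = i b := by
    constructor
    · intro h a b hr
      exact h (Sum.inl a) (Sum.inl b) hr ⟨a, rfl⟩ ⟨b, rfl⟩
    · rintro h x y hr ⟨a, rfl⟩ ⟨b, rfl⟩
      exact h a b hr
  by_cases h : ∀ a b : Fin k, p.r (Sum.inl a) (Sum.inl b) → i a = i b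
  · rw [if_pos (hcond.mpr h), if_pos h]
    push_cast
    rfl
  · rw [if_neg (fun hc => h (hcond.mp hc)), if_neg h]
    exact Nat.cast_zero

open scoped Classical in
lemma colsum (M : ℕ) (hM : 0 < M) (p : PP k l) (j : Fin l → Fin M) :
    (∑ i : Fin k → Fin M, Tmat0 M p j i)
      = if (∀ a b : Fin l, p.r (Sum.inr a) (Sum.inr b) → j a = j b)
        then (M:ℂ) ^ (loP (swapP p)) else 0 := by
  have h1 : ∀ i : Fin k → Fin M, Tmat0 M p j i = Tmat0 M (swapP p) i j :=
    fun i => (Tmat0_swap M p i j).symm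
  rw [Finset.sum_congr rfl (fun i _ => h1 i), rowsum M hM (swapP p) j]
  refine ite_congr' ?_ _ _
  constructor
  · exact fun h a b hr => h a b hr
  · exact fun h a b hr => h a b hr

lemma comp_mul (M : ℕ) (hM : 0 < M) (q : PP l m) (p : PP k l) :
    Tmat0 M q * Tmat0 M p = (M:ℂ) ^ (rlP q p) • Tmat0 M (compP q p) := by
  classical
  ext j i
  rw [Matrix.mul_apply, Matrix.smul_apply]
  set S := bigS p q with hS
  set O : Fin k ⊕ (Fin l ⊕ Fin m) → Prop :=
    fun x => (∃ a, x = Sum.inl a) ∨ (∃ b, x = Sum.inr (Sum.inr b)) with hO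
  set f : Fin k ⊕ (Fin l ⊕ Fin m) → Fin M :=
    Sum.elim i (Sum.elim (fun _ => ⟨0, hM⟩) j) with hf
  have key := master M S O f
  have h1 : ∀ m' : Fin l → Fin M, Tmat0 M q j m' * Tmat0 M p m' i
      = if ((∀ x y, S.r x y → Sum.elim i (Sum.elim m' j) x = Sum.elim i (Sum.elim m' j) y) ∧
            ∀ x, O x → Sum.elim i (Sum.elim m' j) x = f x) then (1:ℂ) else 0 := by
    intro m'
    have hmid : (∀ x y, midRel p q x y →
          Sum.elim i (Sum.elim m' j) x = Sum.elim i (Sum.elim m' j) y)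
        ↔ ((∀ x y, q.r x y → Sum.elim m' j x = Sum.elim m' j y) ∧
           (∀ x y, p.r x y → Sum.elim i m' x = Sum.elim i m' y)) := by
      have hmap : ∀ a : Fin k ⊕ Fin l,
          Sum.elim i (Sum.elim m' j) (Sum.map id Sum.inl a) = Sum.elim i m' a := by
        intro a; cases a <;> rfl
      constructor
      · intro h
        constructor
        · intro x y hxy
          exact h (Sum.inr x) (Sum.inr y) (Or.inr ⟨x, y, hxy, rfl, rfl⟩)
        · intro x y hxy
          have := h (Sum.map id Sum.inl x) (Sum.map id Sum.inl y) (Or.inl ⟨x, y, hxy, rfl, rfl⟩)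
          rwa [hmap, hmap] at this
      · rintro ⟨hq, hp⟩ x y (⟨a, b, hab, rfl, rfl⟩ | ⟨a, b, hab, rfl, rfl⟩)
        · rw [hmap, hmap]; exact hp a b hab
        · exact hq a b hab
    have hSr : (∀ x y, S.r x y →
          Sum.elim i (Sum.elim m' j) x = Sum.elim i (Sum.elim m' j) y)
        ↔ (∀ x y, midRel p q x y →
          Sum.elim i (Sum.elim m' j) x = Sum.elim i (Sum.elim m' j) y) :=
      forall_eqvGen_iff (midRel p q) _
    unfold Tmat0
    rw [ite_mul, one_mul, zero_mul, ← ite_and]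
    refine ite_congr' ?_ _ _
    constructor
    · intro h
      refine ⟨hSr.mpr (hmid.mpr ⟨h.1, h.2⟩), ?_⟩
      rintro x (⟨a, rfl⟩ | ⟨b, rfl⟩) <;> rfl
    · intro h
      exact (hmid.mp (hSr.mp h.1))
  rw [Finset.sum_congr rfl (fun m' _ => h1 m'), sum_ite_count]
  have hrec : ∀ c : {c : Fin k ⊕ (Fin l ⊕ Fin m) → Fin M //
      (∀ x y, S.r x y → c x = c y) ∧ ∀ x, O x → c x = f x},
      Sum.elim i (Sum.elim (fun b => c.1 (Sum.inr (Sum.inl b))) j) = c.1 := by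
    rintro ⟨c, hr, ha⟩
    funext x
    rcases x with a | (b | b)
    · exact (ha _ (Or.inl ⟨a, rfl⟩)).symm
    · rfl
    · exact (ha _ (Or.inr ⟨b, rfl⟩)).symm
  have e : {m' : Fin l → Fin M //
        (∀ x y, S.r x y → Sum.elim i (Sum.elim m' j) x = Sum.elim i (Sum.elim m' j) y) ∧
        ∀ x, O x → Sum.elim i (Sum.elim m' j) x = f x}
      ≃ {c : Fin k ⊕ (Fin l ⊕ Fin m) → Fin M //
        (∀ x y, S.r x y → c x = c y) ∧ ∀ x, O x → c x = f x} :=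
    ⟨fun m' => ⟨Sum.elim i (Sum.elim m'.1 j), m'.2⟩,
     fun c => ⟨fun b => c.1 (Sum.inr (Sum.inl b)), by rw [hrec c]; exact c.2⟩,
     fun m' => rfl, fun c => Subtype.ext (hrec c)⟩
  rw [Nat.card_congr e, key]
  have hcard : Nat.card {B : Quotient S // ∀ x, Quotient.mk S x = B → ¬ O x} = rlP q p := by
    refine Nat.card_congr (Equiv.subtypeEquivRight ?_)
    intro B
    refine forall_congr' fun x => forall_congr' fun _ => ?_
    rcases x with a | (b | b) <;> simp [hO]
  rw [hcard]
  have hcond : (∀ x y, S.r x y → O x → O y → f x = f y)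
      ↔ ∀ x y, (compP q p).r x y → Sum.elim i j x = Sum.elim i j y := by
    have hemb : ∀ x : Fin k ⊕ Fin m, f (Sum.map id Sum.inr x) = Sum.elim i j x := by
      intro x; cases x <;> rfl
    have hOemb : ∀ x : Fin k ⊕ Fin m, O (Sum.map id Sum.inr x) := by
      rintro (a | b)
      · exact Or.inl ⟨a, rfl⟩
      · exact Or.inr ⟨b, rfl⟩
    constructor
    · intro h x y hxy
      have := h _ _ hxy (hOemb x) (hOemb y)
      rwa [hemb, hemb] at this
    · rintro h x y hxy (⟨a, rfl⟩ | ⟨b, rfl⟩) (⟨a', rfl⟩ | ⟨b', rfl⟩)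
      · exact h (Sum.inl a) (Sum.inl a') hxy
      · exact h (Sum.inl a) (Sum.inr b') hxy
      · exact h (Sum.inr b) (Sum.inl a') hxy
      · exact h (Sum.inr b) (Sum.inr b') hxy
  by_cases h : ∀ x y, (compP q p).r x y → Sum.elim i j x = Sum.elim i j y
  · rw [if_pos (hcond.mpr h)]
    unfold Tmat0
    rw [if_pos h, smul_eq_mul, mul_one]
    push_cast
    rfl
  · rw [if_neg (fun hc => h (hcond.mp hc))]
    unfold Tmat0
    rw [if_neg h]
    simp

end Aux2
section Aux3
variable {k l m : ℕ}

noncomputable def eQswap (p : PP k l) : Quotient (swapP p) ≃ Quotient p :=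
  Quotient.congr (Equiv.sumComm (Fin l) (Fin k)) (fun _ _ => Iff.rfl)

lemma eQswap_mk (p : PP k l) (x : Fin l ⊕ Fin k) :
    eQswap p (Quotient.mk (swapP p) x) = Quotient.mk p (Sum.swap x) :=
  Quotient.congr_mk _ _ x

lemma loP_swap (p : PP k l) :
    loP (swapP p) = Nat.card {B : Quotient p // ∀ x, Quotient.mk p x = B → ∃ a : Fin k, x = Sum.inl a} := by
  unfold loP
  refine Nat.card_congr (Equiv.subtypeEquiv (eQswap p) ?_)
  intro B
  constructor
  · intro h y hy
    have h1 : eQswap p (Quotient.mk (swapP p) (Sum.swap y)) = eQswap p B := by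
      rw [eQswap_mk, Sum.swap_swap, hy]
    obtain ⟨b, hb⟩ := h _ ((eQswap p).injective h1)
    refine ⟨b, ?_⟩
    have := congrArg Sum.swap hb
    rwa [Sum.swap_swap] at this
  · intro h x hx
    have h1 : Quotient.mk p (Sum.swap x) = eQswap p B := by
      rw [← eQswap_mk]; exact congrArg _ hx
    obtain ⟨a, ha⟩ := h _ h1
    refine ⟨a, ?_⟩
    have := congrArg Sum.swap ha
    rwa [Sum.swap_swap] at this
  
lemma beta_eq (p : PP k l) : betaP p = loP p + loP (swapP p) := by
  classical
  haveI : Fintype (Quotient p) := Fintype.ofFinite _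
  have hlo : loP p = Nat.card {c : Quotient p // ¬ ∃ a : Fin k, Quotient.mk p (Sum.inl a) = c} := by
    refine Nat.card_congr (Equiv.subtypeEquivRight ?_)
    intro c
    constructor
    · rintro h ⟨a, ha⟩
      obtain ⟨b, hb⟩ := h _ ha
      simp at hb
    · intro hna x hx
      cases x with
      | inl a => exact absurd ⟨a, hx⟩ hna
      | inr b => exact ⟨b, rfl⟩
  have hup : loP (swapP p) = Nat.card {c : Quotient p // ¬ ∃ b : Fin l, Quotient.mk p (Sum.inr b) = c} := by
    rw [loP_swap]
    refine Nat.card_congr (Equiv.subtypeEquivRight ?_)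
    intro c
    constructor
    · rintro h ⟨b, hb⟩
      obtain ⟨a, ha⟩ := h _ hb
      simp at ha
    · intro hna x hx
      cases x with
      | inl a => exact ⟨a, rfl⟩
      | inr b => exact absurd ⟨b, hx⟩ hna
  have key : Nat.card (Quotient p)
      = Nat.card {c : Quotient p // (∃ a : Fin k, Quotient.mk p (Sum.inl a) = c)
          ∧ (∃ b : Fin l, Quotient.mk p (Sum.inr b) = c)}
      + (Nat.card {c : Quotient p // ¬ ∃ a : Fin k, Quotient.mk p (Sum.inl a) = c}
        + Nat.card {c : Quotient p // ¬ ∃ b : Fin l, Quotient.mk p (Sum.inr b) = c}) := by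
    rw [Nat.card_eq_fintype_card, Nat.card_eq_fintype_card, Nat.card_eq_fintype_card,
      Nat.card_eq_fintype_card, Fintype.card_subtype, Fintype.card_subtype,
      Fintype.card_subtype, ← Finset.card_univ]
    have h1 := Finset.card_filter_add_card_filter_not
      (s := (Finset.univ : Finset (Quotient p)))
      (p := fun c => (∃ a : Fin k, Quotient.mk p (Sum.inl a) = c)
          ∧ (∃ b : Fin l, Quotient.mk p (Sum.inr b) = c))
    have h2 : Finset.univ.filter (fun c : Quotient p =>
          ¬((∃ a : Fin k, Quotient.mk p (Sum.inl a) = c)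
            ∧ (∃ b : Fin l, Quotient.mk p (Sum.inr b) = c)))
        = Finset.univ.filter (fun c => ¬ ∃ a : Fin k, Quotient.mk p (Sum.inl a) = c)
          ∪ Finset.univ.filter (fun c => ¬ ∃ b : Fin l, Quotient.mk p (Sum.inr b) = c) := by
      ext c
      simp only [Finset.mem_filter, Finset.mem_union, Finset.mem_univ, true_and]
      tauto
    have h3 : Disjoint
        (Finset.univ.filter (fun c : Quotient p => ¬ ∃ a : Fin k, Quotient.mk p (Sum.inl a) = c))
        (Finset.univ.filter (fun c => ¬ ∃ b : Fin l, Quotient.mk p (Sum.inr b) = c)) := by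
      rw [Finset.disjoint_left]
      intro c hc1 hc2
      simp only [Finset.mem_filter, Finset.mem_univ, true_and] at hc1 hc2
      induction c using Quotient.ind with
      | _ x =>
        cases x with
        | inl a => exact hc1 ⟨a, rfl⟩
        | inr b => exact hc2 ⟨b, rfl⟩
    rw [h2, Finset.card_union_of_disjoint h3] at h1
    omega
  unfold betaP bP tP
  rw [hlo, hup]
  omega

lemma two_pow_inj {a b : ℕ} (h : (2:ℂ)^a = (2:ℂ)^b) : a = b := by
  have h2 : ((2^a : ℕ) : ℂ) = ((2^b : ℕ) : ℂ) := by push_cast; exact h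
  exact Nat.pow_right_injective le_rfl (Nat.cast_injective h2)

lemma ite_mul_Tmat0 (M : ℕ) (p : PP k l) (a : Fin l → Fin M) (b : Fin k → Fin M)
    {c : Prop} [Decidable c]
    (h : (∀ x y, p.r x y → Sum.elim b a x = Sum.elim b a y) → c) (v : ℂ) :
    (if c then v else 0) * Tmat0 M p a b = v * Tmat0 M p a b := by
  unfold Tmat0
  by_cases hT : ∀ x y, p.r x y → Sum.elim b a x = Sum.elim b a y
  · rw [if_pos (h hT)]
  · rw [if_neg hT, mul_zero, mul_zero]

end Aux3
section Aux4
variable {k l m : ℕ}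

lemma rl_swap_right (p : PP k l) : rlP p (swapP p) = loP (swapP p) := by
  classical
  have h := comp_mul 2 (by norm_num) p (swapP p)
  have h0 := congrFun (congrFun h (fun _ => (0 : Fin 2))) (fun _ => (0 : Fin 2))
  rw [Matrix.mul_apply] at h0
  have hL : ∀ m' : Fin k → Fin 2,
      Tmat0 2 p (fun _ => (0 : Fin 2)) m' * Tmat0 2 (swapP p) m' (fun _ => (0 : Fin 2))
        = Tmat0 2 p (fun _ => (0 : Fin 2)) m' := by
    intro m'
    rw [Tmat0_swap, Tmat0_idem]
  rw [Finset.sum_congr rfl (fun m' _ => hL m'),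
    colsum 2 (by norm_num) p (fun _ => (0 : Fin 2)), if_pos (fun _ _ _ => rfl),
    Matrix.smul_apply, Tmat0_const, smul_eq_mul, mul_one] at h0
  push_cast at h0
  exact (two_pow_inj h0).symm

lemma rl_swap_left (p : PP k l) : rlP (swapP p) p = loP p := by
  classical
  have h := comp_mul 2 (by norm_num) (swapP p) p
  have h0 := congrFun (congrFun h (fun _ => (0 : Fin 2))) (fun _ => (0 : Fin 2))
  rw [Matrix.mul_apply] at h0
  have hL : ∀ m' : Fin l → Fin 2,
      Tmat0 2 (swapP p) (fun _ => (0 : Fin 2)) m' * Tmat0 2 p m' (fun _ => (0 : Fin 2))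
        = Tmat0 2 p m' (fun _ => (0 : Fin 2)) := by
    intro m'
    rw [Tmat0_swap, Tmat0_idem]
  rw [Finset.sum_congr rfl (fun m' _ => hL m'),
    rowsum 2 (by norm_num) p (fun _ => (0 : Fin 2)), if_pos (fun _ _ _ => rfl),
    Matrix.smul_apply, Tmat0_const, smul_eq_mul, mul_one] at h0
  push_cast at h0
  exact (two_pow_inj h0).symm

lemma lo_comp (p : PP k l) : loP (compP p (swapP p)) = loP p := by
  classical
  have h := comp_mul 2 (by norm_num) p (swapP p)
  have h0 := congrArg (fun A : Matrix (Fin l → Fin 2) (Fin l → Fin 2) ℂ =>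
    ∑ j : Fin l → Fin 2, A j (fun _ => (0 : Fin 2))) h
  push_cast at h0
  have hL : (∑ j : Fin l → Fin 2,
        (Tmat0 2 p * Tmat0 2 (swapP p)) j (fun _ => (0 : Fin 2)))
      = (2:ℂ)^(loP p) * (2:ℂ)^(loP (swapP p)) := by
    simp only [Matrix.mul_apply]
    rw [Finset.sum_comm]
    have hstep : ∀ m' : Fin k → Fin 2,
        (∑ j : Fin l → Fin 2, Tmat0 2 p j m' * Tmat0 2 (swapP p) m' (fun _ => (0 : Fin 2)))
          = (2:ℂ)^(loP p) * Tmat0 2 p (fun _ => (0 : Fin 2)) m' := by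
      intro m'
      rw [← Finset.sum_mul, rowsum 2 (by norm_num) p m', Tmat0_swap]
      exact ite_mul_Tmat0 2 p (fun _ => (0 : Fin 2)) m'
        (fun hT a b hab => hT (Sum.inl a) (Sum.inl b) hab) _
    rw [Finset.sum_congr rfl (fun m' _ => hstep m'), ← Finset.mul_sum,
      colsum 2 (by norm_num) p (fun _ => (0 : Fin 2)), if_pos (fun _ _ _ => rfl)]
    norm_cast
  have hR : (∑ j : Fin l → Fin 2,
        ((2:ℂ)^(rlP p (swapP p)) • Tmat0 2 (compP p (swapP p))) j (fun _ => (0 : Fin 2)))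
      = (2:ℂ)^(rlP p (swapP p)) * (2:ℂ)^(loP (compP p (swapP p))) := by
    simp only [Matrix.smul_apply, smul_eq_mul]
    rw [← Finset.mul_sum, rowsum 2 (by norm_num) _ (fun _ => (0 : Fin 2)),
      if_pos (fun _ _ _ => rfl)]
    norm_cast
  rw [hL, hR, rl_swap_right] at h0
  rw [← pow_add, ← pow_add] at h0
  have := two_pow_inj h0
  omega

lemma uo_comp (p : PP k l) : loP (swapP (compP p (swapP p))) = loP p := by
  classical
  have h := comp_mul 2 (by norm_num) p (swapP p)
  have h0 := congrArg (fun A : Matrix (Fin l → Fin 2) (Fin l → Fin 2) ℂ =>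
    ∑ i : Fin l → Fin 2, A (fun _ => (0 : Fin 2)) i) h
  push_cast at h0
  have hL : (∑ i : Fin l → Fin 2,
        (Tmat0 2 p * Tmat0 2 (swapP p)) (fun _ => (0 : Fin 2)) i)
      = (2:ℂ)^(loP p) * (2:ℂ)^(loP (swapP p)) := by
    simp only [Matrix.mul_apply]
    rw [Finset.sum_comm]
    have hstep : ∀ m' : Fin k → Fin 2,
        (∑ i : Fin l → Fin 2, Tmat0 2 p (fun _ => (0 : Fin 2)) m' * Tmat0 2 (swapP p) m' i)
          = (2:ℂ)^(loP p) * Tmat0 2 p (fun _ => (0 : Fin 2)) m' := by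
      intro m'
      rw [← Finset.mul_sum]
      have hcs := colsum 2 (by norm_num) (swapP p) m'
      rw [swapP_swapP] at hcs
      rw [hcs, mul_comm]
      exact ite_mul_Tmat0 2 p (fun _ => (0 : Fin 2)) m'
        (fun hT a b hab => hT (Sum.inl a) (Sum.inl b) hab) _
    rw [Finset.sum_congr rfl (fun m' _ => hstep m'), ← Finset.mul_sum,
      colsum 2 (by norm_num) p (fun _ => (0 : Fin 2)), if_pos (fun _ _ _ => rfl)]
    norm_cast
  have hR : (∑ i : Fin l → Fin 2,
        ((2:ℂ)^(rlP p (swapP p)) • Tmat0 2 (compP p (swapP p))) (fun _ => (0 : Fin 2)) i)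
      = (2:ℂ)^(rlP p (swapP p)) * (2:ℂ)^(loP (swapP (compP p (swapP p)))) := by
    simp only [Matrix.smul_apply, smul_eq_mul]
    rw [← Finset.mul_sum, colsum 2 (by norm_num) _ (fun _ => (0 : Fin 2)),
      if_pos (fun _ _ _ => rfl)]
    norm_cast
  rw [hL, hR, rl_swap_right] at h0
  rw [← pow_add, ← pow_add] at h0
  have := two_pow_inj h0
  omega

end Aux4
section Aux5
variable {k l : ℕ}

/-- rows: i-row (k), b-row (l), a-row (k), j-row (l) -/
def X3 (k l : ℕ) := Fin k ⊕ (Fin l ⊕ (Fin k ⊕ Fin l))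

def e1 {k l : ℕ} : Fin k ⊕ Fin l → X3 k l :=
  Sum.elim (fun a => Sum.inl a) (fun b => Sum.inr (Sum.inl b))
def e2 {k l : ℕ} : Fin k ⊕ Fin l → X3 k l :=
  Sum.elim (fun a => Sum.inr (Sum.inr (Sum.inl a))) (fun b => Sum.inr (Sum.inl b))
def e3 {k l : ℕ} : Fin k ⊕ Fin l → X3 k l :=
  Sum.elim (fun a => Sum.inr (Sum.inr (Sum.inl a))) (fun b => Sum.inr (Sum.inr (Sum.inr b)))

def R3 (p : PP k l) : X3 k l → X3 k l → Prop := fun x y =>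
  (∃ u v, p.r u v ∧ x = e1 u ∧ y = e1 v) ∨
  (∃ u v, p.r u v ∧ x = e2 u ∧ y = e2 v) ∨
  (∃ u v, p.r u v ∧ x = e3 u ∧ y = e3 v)

def S3 (p : PP k l) : Setoid (X3 k l) := Relation.EqvGen.setoid (R3 p)

def O3 (k l : ℕ) : X3 k l → Prop := fun x =>
  (∃ a : Fin k, x = Sum.inl a) ∨ (∃ b : Fin l, x = Sum.inr (Sum.inr (Sum.inr b)))

noncomputable def w3 (p : PP k l) : ℕ :=
  Nat.card {B : Quotient (S3 p) // ∀ x, Quotient.mk (S3 p) x = B → ¬ O3 k l x}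

instance : Fintype (X3 k l) := by unfold X3; infer_instance

lemma triple_cond_iff (p : PP k l) {M : ℕ} (i : Fin k → Fin M) (j : Fin l → Fin M)
    (f : X3 k l → Fin M) (hfi : ∀ a, f (Sum.inl a) = i a)
    (hfj : ∀ b, f (Sum.inr (Sum.inr (Sum.inr b))) = j b) :
    (∀ x y, (S3 p).r x y → O3 k l x → O3 k l y → f x = f y)
      ↔ (∀ x y, p.r x y → Sum.elim i j x = Sum.elim i j y) := by
  constructor
  · intro h u v huv
    rcases u with a | b <;> rcases v with a' | b'
    · have hrel : (S3 p).r (Sum.inl a) (Sum.inl a') :=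
        Relation.EqvGen.rel _ _ (Or.inl ⟨Sum.inl a, Sum.inl a', huv, rfl, rfl⟩)
      have := h _ _ hrel (Or.inl ⟨a, rfl⟩) (Or.inl ⟨a', rfl⟩)
      rw [hfi, hfi] at this
      exact this
    · have r1 : Relation.EqvGen (R3 p) (Sum.inl a) (Sum.inr (Sum.inl b')) :=
        Relation.EqvGen.rel _ _ (Or.inl ⟨Sum.inl a, Sum.inr b', huv, rfl, rfl⟩)
      have r2 : Relation.EqvGen (R3 p) (Sum.inr (Sum.inr (Sum.inl a))) (Sum.inr (Sum.inl b')) :=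
        Relation.EqvGen.rel _ _ (Or.inr (Or.inl ⟨Sum.inl a, Sum.inr b', huv, rfl, rfl⟩))
      have r3 : Relation.EqvGen (R3 p) (Sum.inr (Sum.inr (Sum.inl a)))
          (Sum.inr (Sum.inr (Sum.inr b'))) :=
        Relation.EqvGen.rel _ _ (Or.inr (Or.inr ⟨Sum.inl a, Sum.inr b', huv, rfl, rfl⟩))
      have hrel : (S3 p).r (Sum.inl a) (Sum.inr (Sum.inr (Sum.inr b'))) :=
        Relation.EqvGen.trans _ _ _ r1
          (Relation.EqvGen.trans _ _ _ (Relation.EqvGen.symm _ _ r2) r3)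
      have := h _ _ hrel (Or.inl ⟨a, rfl⟩) (Or.inr ⟨b', rfl⟩)
      rw [hfi, hfj] at this
      exact this
    · have huv' := p.iseqv.symm huv
      have r1 : Relation.EqvGen (R3 p) (Sum.inl a') (Sum.inr (Sum.inl b)) :=
        Relation.EqvGen.rel _ _ (Or.inl ⟨Sum.inl a', Sum.inr b, huv', rfl, rfl⟩)
      have r2 : Relation.EqvGen (R3 p) (Sum.inr (Sum.inr (Sum.inl a'))) (Sum.inr (Sum.inl b)) :=
        Relation.EqvGen.rel _ _ (Or.inr (Or.inl ⟨Sum.inl a', Sum.inr b, huv', rfl, rfl⟩))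
      have r3 : Relation.EqvGen (R3 p) (Sum.inr (Sum.inr (Sum.inl a')))
          (Sum.inr (Sum.inr (Sum.inr b))) :=
        Relation.EqvGen.rel _ _ (Or.inr (Or.inr ⟨Sum.inl a', Sum.inr b, huv', rfl, rfl⟩))
      have hrel : (S3 p).r (Sum.inl a') (Sum.inr (Sum.inr (Sum.inr b))) :=
        Relation.EqvGen.trans _ _ _ r1
          (Relation.EqvGen.trans _ _ _ (Relation.EqvGen.symm _ _ r2) r3)
      have := h _ _ hrel (Or.inl ⟨a', rfl⟩) (Or.inr ⟨b, rfl⟩)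
      rw [hfi, hfj] at this
      exact this.symm
    · have hrel : (S3 p).r (Sum.inr (Sum.inr (Sum.inr b))) (Sum.inr (Sum.inr (Sum.inr b'))) :=
        Relation.EqvGen.rel _ _ (Or.inr (Or.inr ⟨Sum.inr b, Sum.inr b', huv, rfl, rfl⟩))
      have := h _ _ hrel (Or.inr ⟨b, rfl⟩) (Or.inr ⟨b', rfl⟩)
      rw [hfj, hfj] at this
      exact this
  · intro h x y hS hOx hOy
    -- the witness colouring
    have hcphi : ∀ a b, R3 p a b →
        Sum.elim i (Sum.elim j (Sum.elim i j)) a = Sum.elim i (Sum.elim j (Sum.elim i j)) b := by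
      have he1 : ∀ u, Sum.elim i (Sum.elim j (Sum.elim i j)) (e1 (k := k) (l := l) u)
          = Sum.elim i j u := by intro u; cases u <;> rfl
      have he2 : ∀ u, Sum.elim i (Sum.elim j (Sum.elim i j)) (e2 (k := k) (l := l) u)
          = Sum.elim i j u := by intro u; cases u <;> rfl
      have he3 : ∀ u, Sum.elim i (Sum.elim j (Sum.elim i j)) (e3 (k := k) (l := l) u)
          = Sum.elim i j u := by intro u; cases u <;> rfl
      rintro a b (⟨u, v, huv, rfl, rfl⟩ | ⟨u, v, huv, rfl, rfl⟩ | ⟨u, v, huv, rfl, rfl⟩)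
      · rw [he1, he1]; exact h _ _ huv
      · rw [he2, he2]; exact h _ _ huv
      · rw [he3, he3]; exact h _ _ huv
    have hresp := (forall_eqvGen_iff (R3 p) (Sum.elim i (Sum.elim j (Sum.elim i j)))).mpr hcphi
    have hval := hresp _ _ hS
    have hfO : ∀ u, O3 k l u → f u = Sum.elim i (Sum.elim j (Sum.elim i j)) u := by
      rintro u (⟨a, rfl⟩ | ⟨b, rfl⟩)
      · exact hfi a
      · exact hfj b
    rw [hfO _ hOx, hfO _ hOy]
    exact hval

lemma triple_mul (M : ℕ) (hM : 0 < M) (p : PP k l) :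
    Tmat0 M p * Tmat0 M (swapP p) * Tmat0 M p = (M:ℂ) ^ (w3 p) • Tmat0 M p := by
  classical
  ext j i
  rw [Matrix.smul_apply]
  have expand0 : ∀ jj, (Tmat0 M p * Tmat0 M (swapP p) * Tmat0 M p) jj i
      = ∑ b : Fin l → Fin M,
          (Tmat0 M p * Tmat0 M (swapP p)) jj b * Tmat0 M p b i := fun jj => Matrix.mul_apply
  rw [expand0 j]
  have expand : ∀ b : Fin l → Fin M,
      (Tmat0 M p * Tmat0 M (swapP p)) j b * Tmat0 M p b i
        = ∑ a : Fin k → Fin M, Tmat0 M p j a * Tmat0 M p b a * Tmat0 M p b i := by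
    intro b
    rw [Matrix.mul_apply, Finset.sum_mul]
    refine Finset.sum_congr rfl fun a _ => ?_
    rw [Tmat0_swap]
  rw [Finset.sum_congr rfl (fun b _ => expand b), ← Finset.sum_product']
  set f : X3 k l → Fin M :=
    Sum.elim i (Sum.elim (fun _ => ⟨0, hM⟩) (Sum.elim (fun _ => ⟨0, hM⟩) j)) with hf
  have key := master M (S3 p) (O3 k l) f
  have hC : ∀ x : (Fin l → Fin M) × (Fin k → Fin M),
      Tmat0 M p j x.2 * Tmat0 M p x.1 x.2 * Tmat0 M p x.1 i
        = if ((∀ u v, (S3 p).r u v →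
              Sum.elim i (Sum.elim x.1 (Sum.elim x.2 j)) u
                = Sum.elim i (Sum.elim x.1 (Sum.elim x.2 j)) v) ∧
            ∀ u, O3 k l u → Sum.elim i (Sum.elim x.1 (Sum.elim x.2 j)) u = f u)
          then (1:ℂ) else 0 := by
    intro x
    have he1 : ∀ u, Sum.elim i (Sum.elim x.1 (Sum.elim x.2 j)) (e1 (k := k) (l := l) u)
        = Sum.elim i x.1 u := by intro u; cases u <;> rfl
    have he2 : ∀ u, Sum.elim i (Sum.elim x.1 (Sum.elim x.2 j)) (e2 (k := k) (l := l) u)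
        = Sum.elim x.2 x.1 u := by intro u; cases u <;> rfl
    have he3 : ∀ u, Sum.elim i (Sum.elim x.1 (Sum.elim x.2 j)) (e3 (k := k) (l := l) u)
        = Sum.elim x.2 j u := by intro u; cases u <;> rfl
    have hmid : (∀ u v, R3 p u v →
          Sum.elim i (Sum.elim x.1 (Sum.elim x.2 j)) u
            = Sum.elim i (Sum.elim x.1 (Sum.elim x.2 j)) v)
        ↔ ((∀ u v, p.r u v → Sum.elim x.2 j u = Sum.elim x.2 j v) ∧
           (∀ u v, p.r u v → Sum.elim x.2 x.1 u = Sum.elim x.2 x.1 v) ∧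
           (∀ u v, p.r u v → Sum.elim i x.1 u = Sum.elim i x.1 v)) := by
      constructor
      · intro h
        refine ⟨fun u v huv => ?_, fun u v huv => ?_, fun u v huv => ?_⟩
        · have := h _ _ (Or.inr (Or.inr ⟨u, v, huv, rfl, rfl⟩))
          rwa [he3, he3] at this
        · have := h _ _ (Or.inr (Or.inl ⟨u, v, huv, rfl, rfl⟩))
          rwa [he2, he2] at this
        · have := h _ _ (Or.inl ⟨u, v, huv, rfl, rfl⟩)
          rwa [he1, he1] at this
      · rintro ⟨h3, h2, h1⟩ u v (⟨a, b, hab, rfl, rfl⟩ | ⟨a, b, hab, rfl, rfl⟩ |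
          ⟨a, b, hab, rfl, rfl⟩)
        · rw [he1, he1]; exact h1 a b hab
        · rw [he2, he2]; exact h2 a b hab
        · rw [he3, he3]; exact h3 a b hab
    have hSr := forall_eqvGen_iff (R3 p) (Sum.elim i (Sum.elim x.1 (Sum.elim x.2 j)))
    unfold Tmat0
    rw [ite_mul, one_mul, zero_mul, ← ite_and, ite_mul, one_mul, zero_mul, ← ite_and]
    refine ite_congr' ?_ _ _
    constructor
    · rintro ⟨⟨hc3, hc2⟩, hc1⟩
      refine ⟨hSr.mpr (hmid.mpr ⟨hc3, hc2, hc1⟩), ?_⟩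
      rintro u (⟨a, rfl⟩ | ⟨b, rfl⟩) <;> rfl
    · rintro ⟨hr, _⟩
      obtain ⟨h3, h2, h1⟩ := hmid.mp (hSr.mp hr)
      exact ⟨⟨h3, h2⟩, h1⟩
  rw [Finset.sum_congr rfl (fun x _ => hC x), Finset.univ_product_univ, sum_ite_count]
  have hrec : ∀ c : {c : X3 k l → Fin M //
      (∀ u v, (S3 p).r u v → c u = c v) ∧ ∀ u, O3 k l u → c u = f u},
      Sum.elim i (Sum.elim (fun b => c.1 (Sum.inr (Sum.inl b)))
        (Sum.elim (fun a => c.1 (Sum.inr (Sum.inr (Sum.inl a)))) j)) = c.1 := by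
    rintro ⟨c, hr, ha⟩
    funext u
    rcases u with a | (b | (a | b))
    · exact (ha _ (Or.inl ⟨a, rfl⟩)).symm
    · rfl
    · rfl
    · exact (ha _ (Or.inr ⟨b, rfl⟩)).symm
  have e : {x : (Fin l → Fin M) × (Fin k → Fin M) //
        (∀ u v, (S3 p).r u v →
          Sum.elim i (Sum.elim x.1 (Sum.elim x.2 j)) u
            = Sum.elim i (Sum.elim x.1 (Sum.elim x.2 j)) v) ∧
        ∀ u, O3 k l u → Sum.elim i (Sum.elim x.1 (Sum.elim x.2 j)) u = f u}
      ≃ {c : X3 k l → Fin M //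
        (∀ u v, (S3 p).r u v → c u = c v) ∧ ∀ u, O3 k l u → c u = f u} :=
    ⟨fun x => ⟨Sum.elim i (Sum.elim x.1.1 (Sum.elim x.1.2 j)), x.2⟩,
     fun c => ⟨(fun b => c.1 (Sum.inr (Sum.inl b)),
        fun a => c.1 (Sum.inr (Sum.inr (Sum.inl a)))), by rw [hrec c]; exact c.2⟩,
     fun x => rfl, fun c => Subtype.ext (hrec c)⟩
  rw [Nat.card_congr e, key]
  have hcond := triple_cond_iff p i j f (fun a => rfl) (fun b => rfl)
  by_cases h : ∀ x y, p.r x y → Sum.elim i j x = Sum.elim i j y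
  · rw [if_pos (hcond.mpr h)]
    unfold Tmat0
    rw [if_pos h, smul_eq_mul, mul_one]
    unfold w3
    push_cast
    rfl
  · rw [if_neg (fun hc => h (hcond.mp hc))]
    unfold Tmat0
    rw [if_neg h, smul_eq_mul, mul_zero]
    exact Nat.cast_zero

end Aux5
section Aux6
variable {k l : ℕ}

lemma w3_eq (p : PP k l) : w3 p = loP p + loP (swapP p) := by
  classical
  have h := triple_mul 2 (by norm_num) p
  have h0 := congrArg (fun A : Matrix (Fin l → Fin 2) (Fin k → Fin 2) ℂ =>
    ∑ jj : Fin l → Fin 2, A jj (fun _ => (0 : Fin 2))) h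
  push_cast at h0
  have hR : (∑ jj : Fin l → Fin 2,
      ((2:ℂ) ^ (w3 p) • Tmat0 2 p) jj (fun _ => (0 : Fin 2)))
      = (2:ℂ) ^ (w3 p) * (2:ℂ) ^ (loP p) := by
    simp only [Matrix.smul_apply, smul_eq_mul]
    rw [← Finset.mul_sum, rowsum 2 (by norm_num) p (fun _ => (0 : Fin 2)),
      if_pos (fun _ _ _ => rfl)]
    norm_cast
  have hstep1 : ∀ b : Fin l → Fin 2,
      (∑ jj : Fin l → Fin 2, (Tmat0 2 p * Tmat0 2 (swapP p)) jj b)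
        = (2:ℂ) ^ (loP p) * (if (∀ a' b' : Fin l, p.r (Sum.inr a') (Sum.inr b') → b a' = b b')
            then (2:ℂ) ^ (loP (swapP p)) else 0) := by
    intro b
    simp only [Matrix.mul_apply]
    rw [Finset.sum_comm]
    have inner : ∀ a : Fin k → Fin 2,
        (∑ jj : Fin l → Fin 2, Tmat0 2 p jj a * Tmat0 2 (swapP p) a b)
          = (2:ℂ) ^ (loP p) * Tmat0 2 p b a := by
      intro a
      rw [← Finset.sum_mul, rowsum 2 (by norm_num) p a, Tmat0_swap]
      exact ite_mul_Tmat0 2 p b a (fun hT a' b' hab => hT (Sum.inl a') (Sum.inl b') hab) _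
    rw [Finset.sum_congr rfl (fun a _ => inner a), ← Finset.mul_sum,
      colsum 2 (by norm_num) p b]
    norm_cast
  have hL : (∑ jj : Fin l → Fin 2,
      (Tmat0 2 p * Tmat0 2 (swapP p) * Tmat0 2 p) jj (fun _ => (0 : Fin 2)))
      = (2:ℂ) ^ (loP p) * ((2:ℂ) ^ (loP (swapP p)) * (2:ℂ) ^ (loP p)) := by
    have outer : ∀ jj : Fin l → Fin 2,
        (Tmat0 2 p * Tmat0 2 (swapP p) * Tmat0 2 p) jj (fun _ => (0 : Fin 2))
          = ∑ b : Fin l → Fin 2,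
              (Tmat0 2 p * Tmat0 2 (swapP p)) jj b * Tmat0 2 p b (fun _ => (0 : Fin 2)) :=
      fun jj => Matrix.mul_apply
    rw [Finset.sum_congr rfl (fun jj _ => outer jj), Finset.sum_comm]
    have fact : ∀ b : Fin l → Fin 2,
        (∑ jj : Fin l → Fin 2,
          (Tmat0 2 p * Tmat0 2 (swapP p)) jj b * Tmat0 2 p b (fun _ => (0 : Fin 2)))
          = (2:ℂ) ^ (loP p) * ((2:ℂ) ^ (loP (swapP p)) * Tmat0 2 p b (fun _ => (0 : Fin 2))) := by
      intro b
      rw [← Finset.sum_mul, hstep1 b, mul_assoc]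
      congr 1
      exact ite_mul_Tmat0 2 p b (fun _ => (0 : Fin 2))
        (fun hT a' b' hab => hT (Sum.inr a') (Sum.inr b') hab) _
    rw [Finset.sum_congr rfl (fun b _ => fact b), ← Finset.mul_sum, ← Finset.mul_sum,
      rowsum 2 (by norm_num) p (fun _ => (0 : Fin 2)), if_pos (fun _ _ _ => rfl)]
    norm_cast
  rw [hL, hR] at h0
  simp only [← pow_add] at h0
  have := two_pow_inj h0
  omega

lemma w3_beta (p : PP k l) : w3 p = betaP p := by rw [w3_eq, beta_eq]

lemma betaP_swap (p : PP k l) : betaP (swapP p) = betaP p := by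
  rw [beta_eq, beta_eq, swapP_swapP]
  omega

lemma cpow_real (N b : ℕ) : ((N:ℂ) ^ (-(b:ℂ)/2)) = (((N:ℝ) ^ (-(b:ℝ)/2) : ℝ) : ℂ) := by
  have h1 : ((-(b:ℝ)/2 : ℝ) : ℂ) = -(b:ℂ)/2 := by push_cast; ring
  rw [← h1, ← Complex.ofReal_natCast,
    Complex.ofReal_cpow (by positivity : (0:ℝ) ≤ (N:ℝ))]

lemma conj_scalar (N b : ℕ) : star ((N:ℂ) ^ (-(b:ℂ)/2)) = (N:ℂ) ^ (-(b:ℂ)/2) := by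
  rw [cpow_real]
  exact Complex.conj_ofReal _

lemma TmatN_conjT (N : ℕ) (p : PP k l) :
    (TmatN N p).conjTranspose = TmatN N (swapP p) := by
  unfold TmatN
  rw [Matrix.conjTranspose_smul, Tmat0_conjT, betaP_swap, conj_scalar]

lemma scalar_comb (N : ℕ) (hN : 1 ≤ N) (a a' b r : ℕ) (h : a + a' = b + 2*r) :
    ((N:ℂ) ^ (-(a:ℂ)/2)) * ((N:ℂ) ^ (-(a':ℂ)/2)) * (N:ℂ) ^ r = (N:ℂ) ^ (-(b:ℂ)/2) := by
  have hNe : (N:ℂ) ≠ 0 := Nat.cast_ne_zero.mpr (by omega)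
  rw [← Complex.cpow_natCast (N:ℂ) r, ← Complex.cpow_add _ _ hNe, ← Complex.cpow_add _ _ hNe]
  congr 1
  have hc : (a:ℂ) + (a':ℂ) = (b:ℂ) + 2*(r:ℂ) := by exact_mod_cast h
  linear_combination (-1/2 : ℂ) * hc

end Aux6
/-- for projective `p`, `T_p` is an orthogonal projection; in general `T_p`
is a partial isometry with `T_p T_p* = T_{pp*}` and `T_p* T_p = T_{p*p}`. -/
theorem TmatN_projection_partial_isometry (N k l : ℕ) (hN : 1 ≤ N) :
    (∀ p : PP k k, isProjective p →
      TmatN N p * TmatN N p = TmatN N p ∧ (TmatN N p).conjTranspose = TmatN N p) ∧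
    (∀ p : PP k l,
      TmatN N p * (TmatN N p).conjTranspose * TmatN N p = TmatN N p ∧
      TmatN N p * (TmatN N p).conjTranspose = TmatN N (compP p (swapP p)) ∧
      (TmatN N p).conjTranspose * TmatN N p = TmatN N (compP (swapP p) p)) := by
  have hN0 : 0 < N := hN
  constructor
  · rintro p ⟨hps, hpc⟩
    constructor
    · unfold TmatN
      rw [Matrix.smul_mul, Matrix.mul_smul, comp_mul N hN0 p p, hpc, smul_smul, smul_smul]
      congr 1
      have hrl : rlP p p = loP p := by
        have h := rl_swap_right p
        rwa [hps] at h
      have hb : betaP p = loP p + loP (swapP p) := beta_eq p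
      have hb2 : loP (swapP p) = loP p := by rw [hps]
      rw [hrl]
      exact scalar_comb N hN (betaP p) (betaP p) (betaP p) (loP p) (by omega)
    · rw [TmatN_conjT, hps]
  · intro p
    have hc2 : TmatN N p * (TmatN N p).conjTranspose = TmatN N (compP p (swapP p)) := by
      rw [TmatN_conjT]
      unfold TmatN
      rw [Matrix.smul_mul, Matrix.mul_smul, comp_mul N hN0 p (swapP p), smul_smul, smul_smul]
      congr 1
      refine scalar_comb N hN (betaP p) (betaP (swapP p)) (betaP (compP p (swapP p)))
        (rlP p (swapP p)) ?_
      have h1 := beta_eq p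
      have h2 := betaP_swap p
      have h3 : betaP (compP p (swapP p)) = loP p + loP p := by
        rw [beta_eq, lo_comp, uo_comp]
      have h4 := rl_swap_right p
      omega
    have hc3 : (TmatN N p).conjTranspose * TmatN N p = TmatN N (compP (swapP p) p) := by
      rw [TmatN_conjT]
      unfold TmatN
      rw [Matrix.smul_mul, Matrix.mul_smul, comp_mul N hN0 (swapP p) p, smul_smul, smul_smul]
      congr 1
      refine scalar_comb N hN (betaP (swapP p)) (betaP p) (betaP (compP (swapP p) p))
        (rlP (swapP p) p) ?_
      have h1 := beta_eq p
      have h2 := betaP_swap p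
      have h3 : betaP (compP (swapP p) p) = loP (swapP p) + loP (swapP p) := by
        have e : compP (swapP p) p = compP (swapP p) (swapP (swapP p)) := by rw [swapP_swapP]
        rw [e, beta_eq, lo_comp, uo_comp]
      have h4 := rl_swap_left p
      omega
    refine ⟨?_, hc2, hc3⟩
    rw [TmatN_conjT]
    unfold TmatN
    simp only [Matrix.smul_mul, Matrix.mul_smul, smul_smul]
    rw [triple_mul N hN0 p]
    simp only [smul_smul]
    rw [betaP_swap, w3_beta]
    congr 1
    have h1 : ((N:ℂ) ^ (-(betaP p : ℂ)/2)) * ((N:ℂ) ^ (-(betaP p : ℂ)/2))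
        * (N:ℂ) ^ (betaP p) = 1 := by
      have := scalar_comb N hN (betaP p) (betaP p) 0 (betaP p) (by omega)
      rwa [show -((0:ℕ):ℂ)/2 = 0 by norm_num, Complex.cpow_zero] at this
    linear_combination ((N:ℂ) ^ (-(betaP p : ℂ)/2)) * h1
end

section
/- Define γ(p,q) = ½(β(p)+β(q)−β(pq)) − rl(p,q) for composable partitions p,q. Then γ(p,p*) = 0 and γ(p, p*p) = 0 for every partition p; in particular γ(p,p) = 0 for every projective partition p. Moreover, if p and q are projective partitions with pq = q, then γ(q,p) = 0. -/
/-- The correction exponent `γ(p,q) = ½(β(p)+β(q)-β(pq)) - rl(p,q)`. -/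
noncomputable def gammaP {k l m : ℕ} (p : PP l m) (q : PP k l) : ℚ :=
  ((betaP p : ℚ) + (betaP q : ℚ) - (betaP (compP p q) : ℚ)) / 2 - (rlP p q : ℚ)

/-!
Every block of `p` that is not a through-block lies in a single row, so
`β(p) = #upper(p) + #lower(p)`. In each of the compositions `pp*`, `p*p`, `p(p*p)` and, for
symmetric `q` with `pq = q`, `qp`, a block of the generated relation that starts in a one-row
block of a factor cannot leave it: the loops removed are copies of the one-row blocks of `p`
(read in the middle row), and the one-row blocks of the result are copies of those of `p`.
Both sides of `γ = 0` thus become identities between `#upper(p)` and `#lower(p)`; in the last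
case `(pq)* = q*p*` turns `pq = q` into `qp = q`.
-/

open Relation Sum

namespace PP

section Counting

variable {α β ι : Type*}

theorem card_eq_of_surjective_of_eq_iff (f : ι → α) (g : ι → β)
    (hf : Function.Surjective f) (hg : Function.Surjective g)
    (h : ∀ i j, f i = f j ↔ g i = g j) : Nat.card α = Nat.card β := by
  have hker : Setoid.ker f = Setoid.ker g := Setoid.ext fun i j => by
    simpa [Setoid.ker_def] using h i j
  exact Nat.card_congr ((Setoid.quotientKerEquivOfSurjective f hf).symm.trans
    ((Equiv.cast (congrArg Quotient hker)).trans (Setoid.quotientKerEquivOfSurjective g hg)))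

abbrev BlocksWithin (s : Setoid α) (S : α → Prop) : Type _ :=
  {c : Quotient s // ∀ x, Quotient.mk s x = c → S x}

/-- Two families of blocks have the same size when both are parametrized, with the same
coincidences, by one index type. -/
theorem card_blocksWithin_eq {s : Setoid α} {t : Setoid β} {S : α → Prop} {T : β → Prop}
    (e₁ : ι → α) (e₂ : ι → β)
    (he₁ : ∀ i y, s.r (e₁ i) y → S y) (he₂ : ∀ i y, t.r (e₂ i) y → T y)
    (hs : ∀ x, (∀ y, s.r x y → S y) → ∃ i, s.r x (e₁ i))
    (ht : ∀ x, (∀ y, t.r x y → T y) → ∃ i, t.r x (e₂ i))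
    (hst : ∀ i j, s.r (e₁ i) (e₁ j) ↔ t.r (e₂ i) (e₂ j)) :
    Nat.card (BlocksWithin s S) = Nat.card (BlocksWithin t T) := by
  refine card_eq_of_surjective_of_eq_iff
    (fun i => ⟨Quotient.mk s (e₁ i), fun y hy => he₁ i y (s.symm (Quotient.exact hy))⟩)
    (fun i => ⟨Quotient.mk t (e₂ i), fun y hy => he₂ i y (t.symm (Quotient.exact hy))⟩)
    ?_ ?_ fun i j => by simp only [Subtype.mk.injEq, Quotient.eq]; exact hst i j
  · rintro ⟨c, hc⟩
    induction c using Quotient.inductionOn with | h x => ?_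
    obtain ⟨i, hi⟩ := hs x fun y hy => hc y (Quotient.sound (s.symm hy))
    exact ⟨i, Subtype.ext (Quotient.sound (s.symm hi))⟩
  · rintro ⟨c, hc⟩
    induction c using Quotient.inductionOn with | h x => ?_
    obtain ⟨i, hi⟩ := ht x fun y hy => hc y (Quotient.sound (t.symm hy))
    exact ⟨i, Subtype.ext (Quotient.sound (t.symm hi))⟩

theorem card_blocksWithin_comap (e : α ≃ β) (t : Setoid β) (T : β → Prop) :
    Nat.card (BlocksWithin (t.comap e) (T ∘ e)) = Nat.card (BlocksWithin t T) :=
  card_blocksWithin_eq (ι := {x : α // ∀ y, t.r (e x) y → T y}) Subtype.val (e ∘ Subtype.val)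
    (fun i y h => i.2 (e y) h) (fun i y h => i.2 y h)
    (fun x h => ⟨⟨x, fun y hy => by
      simpa using h (e.symm y) (by rwa [Setoid.comap_rel, e.apply_symm_apply])⟩, t.refl _⟩)
    (fun x h => ⟨⟨e.symm x, by simpa using h⟩, by simp⟩)
    (fun _ _ => Iff.rfl)

end Counting

section Blocks

variable {k l : ℕ}

noncomputable def numUpper (p : PP k l) : ℕ := Nat.card (BlocksWithin p fun x => ∃ a, x = inl a)

noncomputable def numLower (p : PP k l) : ℕ := Nat.card (BlocksWithin p fun x => ∃ b, x = inr b)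

theorem forall_mk_eq_imp_inl_iff (p : PP k l) (c : Quotient p) :
    (∀ x, Quotient.mk p x = c → ∃ a, x = inl a) ↔ ∀ b, Quotient.mk p (inr b) ≠ c := by
  refine ⟨fun h b hb => ?_, fun h x hx => ?_⟩
  · obtain ⟨a, ha⟩ := h _ hb
    cases ha
  · cases x with
    | inl a => exact ⟨a, rfl⟩
    | inr b => exact (h b hx).elim

theorem forall_mk_eq_imp_inr_iff (p : PP k l) (c : Quotient p) :
    (∀ x, Quotient.mk p x = c → ∃ b, x = inr b) ↔ ∀ a, Quotient.mk p (inl a) ≠ c := by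
  refine ⟨fun h a ha => ?_, fun h x hx => ?_⟩
  · obtain ⟨b, hb⟩ := h _ ha
    cases hb
  · cases x with
    | inl a => exact (h a hx).elim
    | inr b => exact ⟨b, rfl⟩

theorem bP_eq (p : PP k l) : bP p = tP p + (numUpper p + numLower p) := by
  classical
  let Upper (c : Quotient p) : Prop := ∀ x, Quotient.mk p x = c → ∃ a, x = inl a
  let Lower (c : Quotient p) : Prop := ∀ x, Quotient.mk p x = c → ∃ b, x = inr b
  let Through (c : Quotient p) : Prop :=
    (∃ a, Quotient.mk p (inl a) = c) ∧ ∃ b, Quotient.mk p (inr b) = c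
  have not_through_iff (c) : ¬ Through c ↔ Upper c ∨ Lower c := by
    simp only [Through, Upper, Lower, forall_mk_eq_imp_inl_iff, forall_mk_eq_imp_inr_iff,
      ne_eq, ← not_exists, not_and_or, or_comm]
  have disjoint : Disjoint Upper Lower := by
    rw [Pi.disjoint_iff]
    intro c
    rw [Prop.disjoint_iff]
    rintro ⟨hU, hL⟩
    induction c using Quotient.inductionOn with | h x => ?_
    obtain ⟨a, rfl⟩ := hU x rfl
    obtain ⟨b, hb⟩ := hL _ rfl
    cases hb
  calc bP p = Nat.card {c // Through c} + Nat.card {c // ¬ Through c} := by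
        rw [← Nat.card_sum]; exact Nat.card_congr (Equiv.sumCompl Through).symm
    _ = tP p + (numUpper p + numLower p) := by
        rw [Nat.card_congr ((Equiv.subtypeEquivRight not_through_iff).trans
          (subtypeOrEquiv Upper Lower disjoint)), Nat.card_sum]
        rfl

theorem betaP_eq (p : PP k l) : betaP p = numUpper p + numLower p := by
  rw [betaP, bP_eq, Nat.add_sub_cancel_left]

theorem swapP_swapP (p : PP k l) : swapP (swapP p) = p :=
  Setoid.ext fun x y => by
    change p.r (swap (swap x)) (swap (swap y)) ↔ p.r x y
    rw [swap_swap, swap_swap]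

theorem numUpper_swapP (p : PP k l) : numUpper (swapP p) = numLower p := by
  rw [numUpper, numLower, ← card_blocksWithin_comap (Equiv.sumComm (Fin l) (Fin k))]
  congr 2
  funext x
  cases x <;> simp

theorem numLower_swapP (p : PP k l) : numLower (swapP p) = numUpper p := by
  simpa only [swapP_swapP] using (numUpper_swapP (swapP p)).symm

theorem betaP_swapP (p : PP k l) : betaP (swapP p) = betaP p := by
  rw [betaP_eq, betaP_eq, numUpper_swapP, numLower_swapP, add_comm]

theorem numLower_eq_numUpper_of_swapP_eq {p : PP k k} (hp : swapP p = p) :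
    numLower p = numUpper p := by
  rw [← numUpper_swapP, hp]

end Blocks

section Composition

variable {k l m : ℕ} {P : PP k l} {Q : PP l m}

theorem bigS_le {s : Setoid (Fin k ⊕ (Fin l ⊕ Fin m))}
    (hP : ∀ u v, P.r u v → s.r (Sum.map id inl u) (Sum.map id inl v))
    (hQ : ∀ u v, Q.r u v → s.r (inr u) (inr v)) : bigS P Q ≤ s :=
  Setoid.eqvGen_le fun _ _ => by
    rintro (⟨u, v, huv, rfl, rfl⟩ | ⟨u, v, huv, rfl, rfl⟩)
    exacts [hP u v huv, hQ u v huv]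

theorem bigS_rel_map_inl {u v : Fin k ⊕ Fin l} (h : P.r u v) :
    (bigS P Q).r (Sum.map id inl u) (Sum.map id inl v) :=
  EqvGen.rel _ _ (Or.inl ⟨u, v, h, rfl, rfl⟩)

theorem bigS_rel_inr {u v : Fin l ⊕ Fin m} (h : Q.r u v) : (bigS P Q).r (inr u) (inr v) :=
  EqvGen.rel _ _ (Or.inr ⟨u, v, h, rfl, rfl⟩)

theorem bigS_rel_imp {G : Fin k ⊕ (Fin l ⊕ Fin m) → Prop}
    (hP : ∀ u v, P.r u v → G (Sum.map id inl u) → G (Sum.map id inl v))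
    (hQ : ∀ u v, Q.r u v → G (inr u) → G (inr v))
    {x y} (h : (bigS P Q).r x y) : G x → G y :=
  (Setoid.ker_def.1 (bigS_le (s := Setoid.ker G)
    (fun u v huv => propext ⟨hP u v huv, hP v u (P.symm huv)⟩)
    (fun u v huv => propext ⟨hQ u v huv, hQ v u (Q.symm huv)⟩) h)).mp

theorem compP_rel_inl_inl {a a' : Fin k} (h : P.r (inl a) (inl a')) :
    (compP Q P).r (inl a) (inl a') :=
  bigS_rel_map_inl h

theorem compP_rel_inr_inr {c c' : Fin m} (h : Q.r (inr c) (inr c')) :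
    (compP Q P).r (inr c) (inr c') :=
  bigS_rel_inr h

theorem compP_rel_inl_inr {a : Fin k} {b : Fin l} {c : Fin m} (hP : P.r (inl a) (inr b))
    (hQ : Q.r (inl b) (inr c)) : (compP Q P).r (inl a) (inr c) :=
  (bigS P Q).trans (bigS_rel_map_inl hP) (bigS_rel_inr hQ)

theorem bigS_inl_rel_iff {a : Fin k} (ha : ∀ b, ¬ P.r (inl a) (inr b))
    {z : Fin k ⊕ (Fin l ⊕ Fin m)} :
    (bigS P Q).r (inl a) z ↔ ∃ a', z = inl a' ∧ P.r (inl a) (inl a') := by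
  refine ⟨fun h => bigS_rel_imp (G := fun z => ∃ a', z = inl a' ∧ P.r (inl a) (inl a'))
    ?_ ?_ h ⟨a, rfl, P.refl _⟩, ?_⟩
  · rintro u v huv ⟨a', hu, hr⟩
    obtain rfl : u = inl a' := by cases u <;> simp_all
    cases v with
    | inl a'' => exact ⟨a'', rfl, P.trans hr huv⟩
    | inr b => exact (ha b (P.trans hr huv)).elim
  · rintro u v - ⟨a', hu, -⟩
    cases hu
  · rintro ⟨a', rfl, h⟩
    exact bigS_rel_map_inl h

theorem bigS_inr_inr_rel_iff {c : Fin m} (hc : ∀ b, ¬ Q.r (inl b) (inr c))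
    {z : Fin k ⊕ (Fin l ⊕ Fin m)} :
    (bigS P Q).r (inr (inr c)) z ↔ ∃ c', z = inr (inr c') ∧ Q.r (inr c) (inr c') := by
  refine ⟨fun h => bigS_rel_imp (G := fun z => ∃ c', z = inr (inr c') ∧ Q.r (inr c) (inr c'))
    ?_ ?_ h ⟨c, rfl, Q.refl _⟩, ?_⟩
  · rintro u v - ⟨c', hu, -⟩
    cases u <;> simp at hu
  · rintro u v huv ⟨c', hu, hr⟩
    obtain rfl : u = inr c' := by simpa using hu
    cases v with
    | inl b => exact (hc b (Q.symm (Q.trans hr huv))).elim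
    | inr c'' => exact ⟨c'', rfl, Q.trans hr huv⟩
  · rintro ⟨c', rfl, h⟩
    exact bigS_rel_inr h

theorem bigS_inr_inl_rel_iff
    (hrefine : ∀ b b', (∀ a, ¬ P.r (inl a) (inr b)) → Q.r (inl b) (inl b') → P.r (inr b) (inr b'))
    (hexit : ∀ b c, (∀ a, ¬ P.r (inl a) (inr b)) → ¬ Q.r (inl b) (inr c))
    {b : Fin l} (hb : ∀ a, ¬ P.r (inl a) (inr b))
    {z : Fin k ⊕ (Fin l ⊕ Fin m)} :
    (bigS P Q).r (inr (inl b)) z ↔ ∃ b', z = inr (inl b') ∧ P.r (inr b) (inr b') := by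
  refine ⟨fun h => bigS_rel_imp (G := fun z => ∃ b', z = inr (inl b') ∧ P.r (inr b) (inr b'))
    ?_ ?_ h ⟨b, rfl, P.refl _⟩, ?_⟩
  · rintro u v huv ⟨b', hu, hr⟩
    obtain rfl : u = inr b' := by cases u <;> simp_all
    cases v with
    | inl a => exact (hb a (P.symm (P.trans hr huv))).elim
    | inr b'' => exact ⟨b'', rfl, P.trans hr huv⟩
  · rintro u v huv ⟨b', hu, hr⟩
    obtain rfl : u = inl b' := by simpa using hu
    have hb' : ∀ a, ¬ P.r (inl a) (inr b') := fun a ha => hb a (P.trans ha (P.symm hr))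
    cases v with
    | inl b'' => exact ⟨b'', rfl, P.trans hr (hrefine b' b'' hb' huv)⟩
    | inr c => exact (hexit b' c hb' huv).elim
  · rintro ⟨b', rfl, h⟩
    exact bigS_rel_map_inl (u := inr b) h

theorem rlP_eq_numLower
    (hrefine : ∀ b b', (∀ a, ¬ P.r (inl a) (inr b)) → Q.r (inl b) (inl b') → P.r (inr b) (inr b'))
    (hexit : ∀ b c, (∀ a, ¬ P.r (inl a) (inr b)) → ¬ Q.r (inl b) (inr c)) :
    rlP Q P = numLower P :=
  card_blocksWithin_eq (ι := {b : Fin l // ∀ a, ¬ P.r (inl a) (inr b)})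
    (fun b => inr (inl b.1)) (fun b => inr b.1)
    (fun i y h => by
      obtain ⟨b, rfl, -⟩ := (bigS_inr_inl_rel_iff hrefine hexit i.2).1 h
      exact ⟨b, rfl⟩)
    (fun i y h => by
      cases y with
      | inl a => exact (i.2 a (P.symm h)).elim
      | inr b => exact ⟨b, rfl⟩)
    (fun x h => by
      obtain ⟨b, rfl⟩ := h x ((bigS P Q).refl _)
      refine ⟨⟨b, fun a hab => ?_⟩, (bigS P Q).refl _⟩
      obtain ⟨_, h'⟩ := h (inl a) ((bigS P Q).symm (bigS_rel_map_inl (u := inl a) hab))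
      cases h')
    (fun x h => by
      obtain ⟨b, rfl⟩ := h x (P.refl _)
      refine ⟨⟨b, fun a hab => ?_⟩, P.refl _⟩
      obtain ⟨_, h'⟩ := h (inl a) (P.symm hab)
      cases h')
    (fun i j => by simp [bigS_inr_inl_rel_iff hrefine hexit i.2])

theorem numUpper_compP (hthrough : ∀ a b, P.r (inl a) (inr b) → ∃ c, Q.r (inl b) (inr c)) :
    numUpper (compP Q P) = numUpper P :=
  card_blocksWithin_eq (ι := {a : Fin k // ∀ b, ¬ P.r (inl a) (inr b)})
    (fun a => inl a.1) (fun a => inl a.1)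
    (fun i y h => by
      obtain ⟨a, hy, -⟩ := (bigS_inl_rel_iff i.2).1 h
      cases y <;> simp_all)
    (fun i y h => by
      cases y with
      | inl a => exact ⟨a, rfl⟩
      | inr b => exact (i.2 b h).elim)
    (fun x h => by
      obtain ⟨a, rfl⟩ := h x ((compP Q P).refl _)
      refine ⟨⟨a, fun b hab => ?_⟩, (compP Q P).refl _⟩
      obtain ⟨c, hc⟩ := hthrough a b hab
      obtain ⟨_, h'⟩ := h (inr c) (compP_rel_inl_inr hab hc)
      cases h')
    (fun x h => by
      obtain ⟨a, rfl⟩ := h x (P.refl _)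
      exact ⟨⟨a, fun b hab => by obtain ⟨_, h'⟩ := h (inr b) hab; cases h'⟩, P.refl _⟩)
    (fun i j => (bigS_inl_rel_iff i.2).trans (by simp))

end Composition

section Swap

variable {k l m : ℕ}

/-- Turning the three layers of a composition upside down. -/
def reverseLayers {α β γ : Type*} : γ ⊕ (β ⊕ α) → α ⊕ (β ⊕ γ) :=
  Sum.elim (inr ∘ inr) (Sum.elim (inr ∘ inl) inl)

theorem reverseLayers_map_inr {α β γ : Type*} (x : γ ⊕ α) :
    reverseLayers (Sum.map id inr x : γ ⊕ (β ⊕ α)) = Sum.map id inr x.swap := by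
  cases x <;> rfl

theorem bigS_rel_reverseLayers {p : PP k l} {q : PP l m} {x y}
    (h : (bigS (swapP q) (swapP p)).r x y) : (bigS p q).r (reverseLayers x) (reverseLayers y) :=
  bigS_le (s := (bigS p q).comap reverseLayers)
    (fun u v huv => by cases u <;> cases v <;> exact bigS_rel_inr (P := p) (Q := q) huv)
    (fun u v huv => by cases u <;> cases v <;> exact bigS_rel_map_inl (P := p) (Q := q) huv) h

theorem swapP_compP (p : PP k l) (q : PP l m) :
    swapP (compP q p) = compP (swapP p) (swapP q) := by
  refine Setoid.ext fun x y => ⟨fun h => ?_, fun h => ?_⟩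
  · have := bigS_rel_reverseLayers (p := swapP q) (q := swapP p)
      (x := Sum.map id inr x.swap) (y := Sum.map id inr y.swap)
    rw [swapP_swapP, swapP_swapP] at this
    simp only [reverseLayers_map_inr, Sum.swap_swap] at this
    exact this h
  · have := bigS_rel_reverseLayers h
    rwa [reverseLayers_map_inr, reverseLayers_map_inr] at this

theorem rel_swap_of_swapP_eq {p : PP k k} (hp : swapP p = p) {x y} (h : p.r x y) :
    p.r x.swap y.swap := by
  rw [← hp] at h
  exact h

end Swap

section Gamma

variable {k l : ℕ}

theorem swapP_compP_swapP_self (p : PP k l) :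
    swapP (compP p (swapP p)) = compP p (swapP p) := by
  rw [swapP_compP, swapP_swapP]

theorem numUpper_compP_swapP_self (p : PP k l) : numUpper (compP p (swapP p)) = numLower p := by
  rw [numUpper_compP fun j a h => ⟨j, p.symm h⟩, numUpper_swapP]

theorem betaP_compP_swapP_self (p : PP k l) : betaP (compP p (swapP p)) = 2 * numLower p := by
  rw [betaP_eq, numLower_eq_numUpper_of_swapP_eq (swapP_compP_swapP_self p),
    numUpper_compP_swapP_self, two_mul]

theorem betaP_swapP_compP_self (p : PP k l) : betaP (compP (swapP p) p) = 2 * numUpper p := by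
  simpa only [swapP_swapP, numLower_swapP] using betaP_compP_swapP_self (swapP p)

theorem rlP_swapP_self (p : PP k l) : rlP p (swapP p) = numUpper p := by
  rw [rlP_eq_numLower (P := swapP p) (Q := p) (fun _ _ _ h => h) (fun b c hb h => hb c (p.symm h)),
    numLower_swapP]

theorem compP_swapP_compP_self (p : PP k l) : compP p (compP (swapP p) p) = p := by
  refine le_antisymm (fun x y h => ?_) (fun x y h => ?_)
  · have hfold : compP (swapP p) p ≤ p.comap (Sum.elim inl inl) := fun u v huv => by
      have := bigS_le (s := p.comap (Sum.elim inl (Sum.elim inr inl)))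
        (fun u v h => by cases u <;> cases v <;> exact h)
        (fun u v h => by cases u <;> cases v <;> exact h) huv
      cases u <;> cases v <;> exact this
    have := bigS_le (s := p.comap (Sum.elim inl (Sum.elim inl inr)))
      (fun u v h => by cases u <;> cases v <;> exact hfold h)
      (fun u v h => by cases u <;> cases v <;> exact h) h
    cases x <;> cases y <;> exact this
  · have through {a : Fin k} {j : Fin l} (h : p.r (inl a) (inr j)) :
        (compP p (compP (swapP p) p)).r (inl a) (inr j) :=
      compP_rel_inl_inr (compP_rel_inl_inr (Q := swapP p) h (p.symm h)) h
    cases x <;> cases y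
    · exact compP_rel_inl_inl (compP_rel_inl_inl h)
    · exact through h
    · exact (compP p (compP (swapP p) p)).symm (through (p.symm h))
    · exact compP_rel_inr_inr h

theorem rlP_swapP_compP_self (p : PP k l) : rlP p (compP (swapP p) p) = numUpper p := by
  have hsymm : swapP (compP (swapP p) p) = compP (swapP p) p := by
    rw [swapP_compP, swapP_swapP]
  rw [rlP_eq_numLower (P := compP (swapP p) p) (Q := p) (fun _ _ _ h => compP_rel_inr_inr h)
      (fun b c hb h => hb b (compP_rel_inl_inr h (p.symm h))),
    numLower_eq_numUpper_of_swapP_eq hsymm,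
    numUpper_compP (Q := swapP p) fun a b h => ⟨a, p.symm h⟩]

theorem gammaP_swapP_self (p : PP k l) : gammaP p (swapP p) = 0 := by
  rw [gammaP, betaP_swapP, betaP_compP_swapP_self, rlP_swapP_self, betaP_eq]
  push_cast
  ring

theorem gammaP_swapP_compP_self (p : PP k l) : gammaP p (compP (swapP p) p) = 0 := by
  rw [gammaP, compP_swapP_compP_self, betaP_swapP_compP_self, rlP_swapP_compP_self, betaP_eq]
  push_cast
  ring

theorem rlP_eq_numLower_of_compP_eq {p q : PP k k} (hq : swapP q = q) (hpq : compP p q = q) :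
    rlP q p = numLower p := by
  -- `q = pq`, where a bottom point in a lower block of `p` meets nothing outside that block
  have hq_rel {x y} (h : q.r x y) : (bigS q p).r (Sum.map id inr x) (Sum.map id inr y) := by
    rw [← hpq] at h
    exact h
  refine rlP_eq_numLower (fun b b' hb h => ?_) (fun b c hb h => ?_)
  · obtain ⟨c, hc, hbc⟩ :=
      (bigS_inr_inr_rel_iff hb).1 (hq_rel (rel_swap_of_swapP_eq hq h))
    cases hc
    exact hbc
  · have hcb := (bigS q p).symm (hq_rel (q.symm (rel_swap_of_swapP_eq hq h)))
    obtain ⟨c', hc', -⟩ := (bigS_inr_inr_rel_iff hb).1 hcb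
    cases hc'

theorem gammaP_of_compP_eq {p q : PP k k} (hp : swapP p = p) (hq : swapP q = q)
    (hpq : compP p q = q) : gammaP q p = 0 := by
  have hqp : compP q p = q := calc
    compP q p = compP (swapP q) (swapP p) := by rw [hp, hq]
    _ = swapP (compP p q) := (swapP_compP q p).symm
    _ = q := by rw [hpq, hq]
  rw [gammaP, hqp, rlP_eq_numLower_of_compP_eq hq hpq, betaP_eq p,
    numLower_eq_numUpper_of_swapP_eq hp]
  push_cast
  ring

end Gamma

end PP

/-- `γ(p,p*) = 0` and `γ(p,p*p) = 0` for every partition `p` (in particular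
`γ(p,p) = 0` for projective `p`), and `γ(q,p) = 0` for projective `p,q` with `pq = q`. -/
theorem gamma_vanishing :
    (∀ (k l : ℕ) (p : PP k l), gammaP p (swapP p) = 0 ∧ gammaP p (compP (swapP p) p) = 0) ∧
    (∀ (k : ℕ) (p : PP k k), isProjective p → gammaP p p = 0) ∧
    (∀ (k : ℕ) (p q : PP k k), isProjective p → isProjective q → compP p q = q →
      gammaP q p = 0) := by
  refine ⟨fun _ _ p => ⟨PP.gammaP_swapP_self p, PP.gammaP_swapP_compP_self p⟩,
    fun _ p hp => ?_, fun _ _ _ hp hq hpq => PP.gammaP_of_compP_eq hp.1 hq.1 hpq⟩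
  simpa only [hp.1] using PP.gammaP_swapP_self p
end

section
/- For projective partitions p, q ∈ P(k,k), define q ⪯ p iff pq = q (equivalently qp = q). Then for any N ≥ 2, q ⪯ p holds if and only if the associated projections satisfy T_q ≤ T_p (i.e., T_p T_q = T_q T_p = T_q). -/
namespace Setoid

variable {X Y γ : Type*}

theorem comap_le_ker_comp_iff (e : X ≃ Y) (s : Setoid Y) (F : Y → γ) :
    s.comap e ≤ ker (F ∘ e) ↔ s ≤ ker F := by
  refine ⟨fun h x y hxy => ?_, fun h x y hxy => h hxy⟩
  simpa using @h (e.symm x) (e.symm y) (by simpa [comap_rel] using hxy)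

theorem le_ker_rel (s : Setoid X) (x : X) : s ≤ ker (s x) := fun _ _ hyz =>
  propext ⟨fun h => s.iseqv.trans h hyz, fun h => s.iseqv.trans h (s.iseqv.symm hyz)⟩

theorem le_of_forall_le_ker [Nontrivial γ] {s t : Setoid X}
    (h : ∀ F : X → γ, t ≤ ker F → s ≤ ker F) : s ≤ t := by
  classical
  intro x y hxy
  obtain ⟨a, b, hab⟩ := exists_pair_ne γ
  have hF := h (fun z => if t x z then a else b)
    (fun _ _ hzw => congrArg (fun P => if P then a else b) (le_ker_rel t x hzw)) hxy
  by_contra hxy'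
  simp [ker_def, hxy', hab] at hF

variable {α β : Type*} (s : Setoid (α ⊕ β))

def IsRightClass (c : Quotient s) : Prop := ∀ a, Quotient.mk s (Sum.inl a) ≠ c

def IsLeftClass (c : Quotient s) : Prop := ∀ b, Quotient.mk s (Sum.inr b) ≠ c

variable {s} (g : α → γ)

def sumElimKerEquiv :
    {h : β → γ // s ≤ ker (Sum.elim g h)} ≃
      {F : Quotient s → γ // ∀ a, F (Quotient.mk s (Sum.inl a)) = g a} where
  toFun h := ⟨Quotient.lift (Sum.elim g h.1) h.2, fun _ => rfl⟩
  invFun F := ⟨F.1 ∘ Quotient.mk s ∘ Sum.inr, fun x y hxy => by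
    have hF : Sum.elim g (F.1 ∘ Quotient.mk s ∘ Sum.inr) = F.1 ∘ Quotient.mk s := by
      ext (a | b)
      exacts [(F.2 a).symm, rfl]
    simpa [ker_def, hF] using congrArg F.1 (Quotient.sound hxy)⟩
  left_inv _ := rfl
  right_inv F := by
    ext c
    induction c using Quotient.ind with
    | _ x => rcases x with a | b; exacts [(F.2 a).symm, rfl]

open scoped Classical in
noncomputable def extendFromRightClassesEquiv (hg : s.comap Sum.inl ≤ ker g) :
    {F : Quotient s → γ // ∀ a, F (Quotient.mk s (Sum.inl a)) = g a} ≃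
      ({c // IsRightClass s c} → γ) where
  toFun F c := F.1 c
  invFun u := ⟨fun c => if hc : IsRightClass s c then u ⟨c, hc⟩
      else g (not_forall_not.1 hc).choose, fun a => by
    have hc : ¬ IsRightClass s (Quotient.mk s (Sum.inl a)) := fun hc => hc a rfl
    dsimp only
    rw [dif_neg hc]
    exact hg (Quotient.exact (not_forall_not.1 hc).choose_spec :)⟩
  left_inv F := by
    ext c
    by_cases hc : IsRightClass s c
    · simp [hc]
    · simp only [dif_neg hc]
      rw [← F.2, (not_forall_not.1 hc).choose_spec]
  right_inv u := by
    ext c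
    simp [c.2]

open scoped Classical in
theorem card_le_ker_sumElim [Finite α] [Finite β] :
    Nat.card {h : β → γ // s ≤ ker (Sum.elim g h)} =
      if s.comap Sum.inl ≤ ker g then Nat.card γ ^ Nat.card {c // IsRightClass s c} else 0 := by
  split_ifs with hg
  · rw [Nat.card_congr ((sumElimKerEquiv g).trans (extendFromRightClassesEquiv g hg)),
      Nat.card_fun]
  · have : IsEmpty {h : β → γ // s ≤ ker (Sum.elim g h)} :=
      ⟨fun h => hg fun x y hxy => h.2 hxy⟩
    exact Nat.card_of_isEmpty

theorem IsRightClass.exists_mk_inr {c : Quotient s} (hc : IsRightClass s c) :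
    ∃ b, Quotient.mk s (Sum.inr b) = c := by
  induction c using Quotient.ind with
  | _ x => rcases x with a | b; exacts [(hc a rfl).elim, ⟨b, rfl⟩]

end Setoid

open Setoid

section Composition

variable {k l m : ℕ}

open scoped Classical in
theorem Tmat0_apply (N : ℕ) (p : PP k l) (j : Fin l → Fin N) (i : Fin k → Fin N) :
    Tmat0 N p j i = if p ≤ ker (Sum.elim i j) then 1 else 0 :=
  if_congr Iff.rfl rfl rfl

theorem bigS_le_ker_iff {γ : Type*} (p : PP k l) (q : PP l m) (F : Fin k ⊕ (Fin l ⊕ Fin m) → γ) :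
    bigS p q ≤ ker F ↔ p ≤ ker (F ∘ Sum.map id Sum.inl) ∧ q ≤ ker (F ∘ Sum.inr) := by
  refine ⟨fun h => ⟨fun x y hxy => h ?_, fun x y hxy => h ?_⟩, fun ⟨hp, hq⟩ => eqvGen_le ?_⟩
  · exact Relation.EqvGen.rel _ _ (Or.inl ⟨x, y, hxy, rfl, rfl⟩)
  · exact Relation.EqvGen.rel _ _ (Or.inr ⟨x, y, hxy, rfl, rfl⟩)
  · rintro _ _ (⟨x, y, hxy, rfl, rfl⟩ | ⟨x, y, hxy, rfl, rfl⟩)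
    exacts [hp hxy, hq hxy]

def midLastEquiv (k l m : ℕ) : (Fin k ⊕ Fin m) ⊕ Fin l ≃ Fin k ⊕ (Fin l ⊕ Fin m) :=
  (Equiv.sumAssoc _ _ _).trans (Equiv.sumCongr (Equiv.refl _) (Equiv.sumComm _ _))

def compSetoid (q : PP l m) (p : PP k l) : Setoid ((Fin k ⊕ Fin m) ⊕ Fin l) :=
  (bigS p q).comap (midLastEquiv k l m)

theorem compSetoid_rel (q : PP l m) (p : PP k l) (x y : (Fin k ⊕ Fin m) ⊕ Fin l) :
    compSetoid q p x y ↔ bigS p q (midLastEquiv k l m x) (midLastEquiv k l m y) :=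
  Iff.rfl

theorem compP_eq_comap_inl (q : PP l m) (p : PP k l) :
    compP q p = (compSetoid q p).comap Sum.inl := by
  ext x y
  rcases x with _ | _ <;> rcases y with _ | _ <;> rfl

theorem rlP_eq_card_isRightClass (q : PP l m) (p : PP k l) :
    rlP q p = Nat.card {c // IsRightClass (compSetoid q p) c} := by
  refine Nat.card_congr (Equiv.subtypeEquiv
    (Quotient.congr (midLastEquiv k l m).symm fun x y => ?_) fun c => ?_)
  · simp only [compSetoid_rel, Equiv.apply_symm_apply]
  · induction c using Quotient.ind with
    | _ x =>
    simp only [Quotient.congr_mk, IsRightClass, ne_eq, Quotient.eq]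
    simp [compSetoid_rel, midLastEquiv]

theorem sumElim_comp_midLastEquiv {γ : Type*} (i : Fin k → γ) (mid : Fin l → γ) (j : Fin m → γ) :
    Sum.elim i (Sum.elim mid j) ∘ midLastEquiv k l m = Sum.elim (Sum.elim i j) mid := by
  ext ((_ | _) | _) <;> rfl

theorem Tmat0_mul (N : ℕ) (q : PP l m) (p : PP k l) :
    Tmat0 N q * Tmat0 N p = ((N : ℂ) ^ rlP q p) • Tmat0 N (compP q p) := by
  classical
  ext j i
  have hmid : ∀ mid : Fin l → Fin N, (q ≤ ker (Sum.elim mid j) ∧ p ≤ ker (Sum.elim i mid)) ↔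
      compSetoid q p ≤ ker (Sum.elim (Sum.elim i j) mid) := by
    intro mid
    rw [compSetoid, ← sumElim_comp_midLastEquiv, comap_le_ker_comp_iff, bigS_le_ker_iff,
      and_comm]
    simp [Sum.elim_comp_map]
  have hcount := card_le_ker_sumElim (s := compSetoid q p) (Sum.elim i j)
  rw [← compP_eq_comap_inl, Nat.card_fin, ← rlP_eq_card_isRightClass] at hcount
  simp only [Matrix.mul_apply, Matrix.smul_apply, Tmat0_apply, ite_zero_mul_ite_zero, mul_one,
    hmid, Finset.sum_boole, smul_eq_mul]
  rw [← Fintype.card_subtype, ← Nat.card_eq_fintype_card, hcount]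
  split_ifs <;> simp

end Composition

section Matrices
open Matrix

variable {k l : ℕ}

theorem Tmat0_transpose (N : ℕ) (p : PP k l) : (Tmat0 N p)ᵀ = Tmat0 N (swapP p) := by
  ext i j
  have hswap := comap_le_ker_comp_iff (Equiv.sumComm _ _) p (Sum.elim i j)
  rw [Equiv.sumComm_apply, Sum.elim_swap] at hswap
  rw [Matrix.transpose_apply, Tmat0_apply, Tmat0_apply, swapP, hswap]

theorem Tmat0_apply_const (N : ℕ) (p : PP k l) (c : Fin N) :
    Tmat0 N p (fun _ => c) (fun _ => c) = 1 := by
  rw [Tmat0_apply, if_pos]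
  rintro (_ | _) (_ | _) _ <;> rfl

theorem Tmat0_injective {N : ℕ} (hN : 2 ≤ N) : Function.Injective (Tmat0 N : PP k l → _) := by
  intro p q h
  have key : ∀ F : Fin k ⊕ Fin l → Fin N, p ≤ ker F ↔ q ≤ ker F := by
    intro F
    have hF := congrFun (congrFun h (F ∘ Sum.inr)) (F ∘ Sum.inl)
    rw [Tmat0_apply, Tmat0_apply, Sum.elim_comp_inl_inr] at hF
    split_ifs at hF <;> simp_all
  have := Fin.nontrivial_iff_two_le.2 hN
  exact le_antisymm (le_of_forall_le_ker fun F => (key F).2)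
    (le_of_forall_le_ker fun F => (key F).1)

theorem coeff_eq_of_smul_Tmat0_eq_smul_Tmat0 {N : ℕ} [NeZero N] {r s : PP k l} {c d : ℂ}
    (h : c • Tmat0 N r = d • Tmat0 N s) : c = d := by
  simpa [Tmat0_apply_const] using congrFun (congrFun h fun _ => 0) fun _ => 0

theorem eq_of_smul_Tmat0_eq_smul_Tmat0 {N : ℕ} (hN : 2 ≤ N) {r s : PP k l} {c d : ℂ} (hd : d ≠ 0)
    (h : c • Tmat0 N r = d • Tmat0 N s) : r = s := by
  have : NeZero N := ⟨by omega⟩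
  rw [coeff_eq_of_smul_Tmat0_eq_smul_Tmat0 h] at h
  exact Tmat0_injective hN (smul_right_injective _ hd h)

end Matrices

section Blocks
variable {k l : ℕ}

theorem betaP_eq_card_isRightClass_add_card_isLeftClass (p : PP k l) :
    betaP p = Nat.card {c // IsRightClass p c} + Nat.card {c // IsLeftClass p c} := by
  classical
  have hdisj : Disjoint (IsRightClass p) (IsLeftClass p) := by
    refine Pi.disjoint_iff.2 fun c => Prop.disjoint_iff.2 fun ⟨hr, hl⟩ => ?_
    obtain ⟨b, rfl⟩ := hr.exists_mk_inr
    exact hl b rfl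
  have hthrough :
      Nat.card (Quotient p) = tP p + Nat.card {c // IsRightClass p c ∨ IsLeftClass p c} := by
    rw [tP, ← Nat.card_sum]
    refine Nat.card_congr ((Equiv.sumCompl _).symm.trans (Equiv.sumCongr (Equiv.refl _)
      (Equiv.subtypeEquivRight fun c => ?_)))
    simp only [IsRightClass, IsLeftClass, not_and_or, not_exists]
  rw [betaP, bP, hthrough, Nat.card_congr (subtypeOrEquiv _ _ hdisj), Nat.card_sum]
  omega

theorem card_isRightClass_swapP (p : PP k l) :
    Nat.card {c // IsRightClass (swapP p) c} = Nat.card {c // IsLeftClass p c} := by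
  refine Nat.card_congr (Equiv.subtypeEquiv
    (Quotient.congr (Equiv.sumComm _ _) fun _ _ => Iff.rfl) fun c => ?_)
  induction c using Quotient.ind with
  | _ x =>
    show (∀ a, _) ↔ ∀ b, Quotient.mk p (Sum.inr b) ≠ Quotient.mk p (Sum.swap x)
    simp only [ne_eq, Quotient.eq]
    rfl

/-- A lower block of a symmetric `p`, placed in the middle row of `p ∘ p`, is a loop: the upper
copy of `p` sees it as a lower block, the lower copy sees its mirror image, an upper block. -/
theorem compSetoid_self_inr_rel {p : PP k k} (hp : swapP p = p) {b : Fin k}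
    (hb : IsRightClass p (Quotient.mk p (Sum.inr b))) {z : (Fin k ⊕ Fin k) ⊕ Fin k}
    (hz : compSetoid p p (Sum.inr b) z) : ∃ b', z = Sum.inr b' ∧ p (Sum.inr b) (Sum.inr b') := by
  have hnot : ∀ a, ¬ p (Sum.inr b) (Sum.inl a) := fun a h =>
    hb a (Quotient.sound (p.iseqv.symm h))
  set G : Fin k ⊕ Fin k → Prop := p (Sum.inr b)
  set F : Fin k ⊕ (Fin k ⊕ Fin k) → Prop := Sum.elim (fun _ => False) (G ∘ Sum.swap)
  have hG : p ≤ ker G := le_ker_rel p _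
  have hGswap : p ≤ ker (G ∘ Sum.swap) := by
    have h := (comap_le_ker_comp_iff (Equiv.sumComm _ _) p G).2 hG
    change swapP p ≤ _ at h
    rwa [hp] at h
  have hFinl : F ∘ Sum.map id Sum.inl = G := by
    ext (a | _)
    exacts [(iff_false_intro (hnot a)).symm, Iff.rfl]
  have hF : bigS p p ≤ ker F := (bigS_le_ker_iff _ _ _).2 ⟨hFinl ▸ hG, hGswap⟩
  have hFz : F (midLastEquiv k k k z) := (hF hz) ▸ p.iseqv.refl _
  rcases z with (a | a) | b'
  exacts [hFz.elim, (hnot a hFz).elim, ⟨b', rfl, hFz⟩]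

theorem midLastEquiv_sumMap_inl (x : Fin k ⊕ Fin k) :
    midLastEquiv k k k (Sum.map Sum.inl id x) = Sum.map id Sum.inl x := by
  rcases x with _ | _ <;> rfl

theorem rlP_self_eq_card_isRightClass {p : PP k k} (hp : swapP p = p) :
    rlP p p = Nat.card {c // IsRightClass p c} := by
  let φ : Quotient p → Quotient (compSetoid p p) := Quotient.map (Sum.map Sum.inl id)
    fun x y hxy => by
      change bigS p p _ _
      rw [midLastEquiv_sumMap_inl, midLastEquiv_sumMap_inl]
      exact Relation.EqvGen.rel _ _ (Or.inl ⟨x, y, hxy, rfl, rfl⟩)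
  have hφ : Set.BijOn φ {c | IsRightClass p c} {d | IsRightClass (compSetoid p p) d} := by
    refine ⟨?_, ?_, ?_⟩
    · rintro c hc
      obtain ⟨b, rfl⟩ := hc.exists_mk_inr
      intro a ha
      obtain ⟨b', hb', -⟩ := compSetoid_self_inr_rel hp hc (Quotient.exact ha.symm)
      exact Sum.inl_ne_inr hb'
    · rintro c hc c' hc' hcc'
      obtain ⟨b, rfl⟩ := hc.exists_mk_inr
      obtain ⟨b', rfl⟩ := hc'.exists_mk_inr
      obtain ⟨_, hb', hbb'⟩ := compSetoid_self_inr_rel hp hc (Quotient.exact hcc')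
      cases hb'
      exact Quotient.sound hbb'
    · rintro d hd
      obtain ⟨b, rfl⟩ := hd.exists_mk_inr
      exact ⟨Quotient.mk p (Sum.inr b), fun a ha => hd (Sum.inl a) (congrArg φ ha), rfl⟩
  rw [rlP_eq_card_isRightClass]
  exact (Nat.card_congr hφ.equiv).symm

theorem betaP_eq_two_mul_rlP {p : PP k k} (hp : swapP p = p) : betaP p = 2 * rlP p p := by
  have hLR := card_isRightClass_swapP p
  rw [hp] at hLR
  rw [betaP_eq_card_isRightClass_add_card_isLeftClass, ← hLR, rlP_self_eq_card_isRightClass hp]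
  ring

end Blocks

section Projections
open Matrix

variable {k l : ℕ}

/-- `rlP` does not depend on `N`: compare both bracketings of `T̊_p T̊_p T̊_q` at `N = 2`. -/
theorem rlP_eq_of_compP_eq {p : PP l l} {q : PP k l} (hpp : compP p p = p)
    (hpq : compP p q = q) : rlP p q = rlP p p := by
  have hassoc := Matrix.mul_assoc (Tmat0 2 p) (Tmat0 2 p) (Tmat0 2 q)
  simp only [Tmat0_mul, hpp, hpq, Matrix.smul_mul, Matrix.mul_smul, smul_smul] at hassoc
  have h2 : (2 : ℕ) ^ (rlP p p + rlP p q) = 2 ^ (rlP p q + rlP p q) := by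
    exact_mod_cast (pow_add (2 : ℂ) _ _).trans
      ((coeff_eq_of_smul_Tmat0_eq_smul_Tmat0 hassoc).trans (pow_add (2 : ℂ) _ _).symm)
  have := Nat.pow_right_injective le_rfl h2
  omega

theorem natCast_cpow_neg_betaP_div_two {p : PP k k} (hp : swapP p = p) (N : ℕ) :
    (N : ℂ) ^ (-(betaP p : ℂ) / 2) = ((N : ℂ) ^ rlP p p)⁻¹ := by
  rw [betaP_eq_two_mul_rlP hp, Nat.cast_mul, Nat.cast_two, neg_div,
    mul_div_cancel_left₀ _ two_ne_zero, Complex.cpow_neg, Complex.cpow_natCast]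

theorem TmatN_transpose {p : PP k k} (hp : swapP p = p) (N : ℕ) : (TmatN N p)ᵀ = TmatN N p := by
  rw [TmatN, transpose_smul, Tmat0_transpose, hp]

theorem TmatN_mul {m : ℕ} (N : ℕ) (q : PP l m) (p : PP k l) :
    TmatN N q * TmatN N p = ((N : ℂ) ^ (-(betaP q : ℂ) / 2) * (N : ℂ) ^ (-(betaP p : ℂ) / 2) *
      (N : ℂ) ^ rlP q p) • Tmat0 N (compP q p) := by
  rw [TmatN, TmatN, Matrix.smul_mul, Matrix.mul_smul, Tmat0_mul, smul_smul, smul_smul]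

end Projections

/-- for projective partitions and `N ≥ 2`, `q ⪯ p` (i.e. `pq = q`) iff
`T_q ≤ T_p` as projections. -/
theorem order_iff_projections {k : ℕ} (N : ℕ) (hN : 2 ≤ N) (p q : PP k k)
    (hp : isProjective p) (hq : isProjective q) :
    compP p q = q ↔
      (TmatN N p * TmatN N q = TmatN N q ∧ TmatN N q * TmatN N p = TmatN N q) := by
  obtain ⟨hps, hpi⟩ := hp
  obtain ⟨hqs, -⟩ := hq
  have hN0 : (N : ℂ) ≠ 0 := Nat.cast_ne_zero.2 (by omega)
  constructor
  · intro hpq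
    have hpq' : TmatN N p * TmatN N q = TmatN N q := by
      rw [TmatN_mul, hpq, rlP_eq_of_compP_eq hpi hpq, natCast_cpow_neg_betaP_div_two hps, TmatN]
      congr 1
      field_simp
    refine ⟨hpq', ?_⟩
    simpa [Matrix.transpose_mul, TmatN_transpose hps, TmatN_transpose hqs] using
      congrArg Matrix.transpose hpq'
  · rintro ⟨hpq, -⟩
    rw [TmatN_mul, TmatN] at hpq
    exact eq_of_smul_Tmat0_eq_smul_Tmat0 hN (by simp [hN0]) hpq
end

section
/- Let p, q ∈ P(k,k) be projective partitions with q ⪯ p (i.e., pq = q). Then t(q) ≤ t(p), with equality if and only if p = q. -/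
/-! For a partition `p`, call an upper point a through-point if it lies on a through-block;
the through-blocks of `p` are then the blocks of its through-points. If `pq = q`, every
relation in the lower row of `p` survives in `pq`, and a lower point of `pq` can only leave its
`p`-block through the middle row. Turning this upside down with the symmetry of `p` and `q`: the
upper row of `p` is finer than that of `q`, and every through-point of `q` is one of `p`. So the
through-blocks of `q` are images of through-blocks of `p`, and `t(q) ≤ t(p)`. Equality of the
counts makes this correspondence bijective, so `p` and `q` have the same through-points and the
same upper row; a projective partition is determined by these two data. -/

section ImageCard

variable {α β γ : Type*} {f : α → β} {g : α → γ} {B : Set α}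

lemma ncard_image_pair_eq_ncard_image (hfg : ∀ a ∈ B, ∀ b ∈ B, f a = f b → g a = g b) :
    ((fun a => (f a, g a)) '' B).ncard = (f '' B).ncard := by
  rw [← Set.image_image Prod.fst (fun a => (f a, g a)) B]
  refine (Set.InjOn.ncard_image ?_).symm
  rintro _ ⟨a, ha, rfl⟩ _ ⟨b, hb, rfl⟩ (hab : f a = f b)
  exact Prod.ext hab (hfg a ha b hb hab)

variable [Finite α]

lemma ncard_image_le_ncard_image_of_factor {A : Set α} (hAB : A ⊆ B)
    (hfg : ∀ a ∈ B, ∀ b ∈ B, f a = f b → g a = g b) :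
    (g '' A).ncard ≤ (f '' B).ncard :=
  calc (g '' A).ncard ≤ (g '' B).ncard := Set.ncard_le_ncard (Set.image_mono hAB)
    _ = (Prod.snd '' ((fun a => (f a, g a)) '' B)).ncard := by rw [Set.image_image]
    _ ≤ ((fun a => (f a, g a)) '' B).ncard := Set.ncard_image_le
    _ = (f '' B).ncard := ncard_image_pair_eq_ncard_image hfg

lemma image_eq_image_of_ncard_image_eq_of_factor {A : Set α} (hAB : A ⊆ B)
    (hfg : ∀ a ∈ B, ∀ b ∈ B, f a = f b → g a = g b)
    (h : (g '' A).ncard = (f '' B).ncard) : g '' A = g '' B := by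
  refine Set.eq_of_subset_of_ncard_le (Set.image_mono hAB) ?_
  rw [h]
  exact ncard_image_le_ncard_image_of_factor subset_rfl hfg

lemma eq_of_ncard_image_eq_of_factor (hfg : ∀ a ∈ B, ∀ b ∈ B, f a = f b → g a = g b)
    (h : (g '' B).ncard = (f '' B).ncard) {a b : α} (ha : a ∈ B) (hb : b ∈ B)
    (hab : g a = g b) : f a = f b := by
  rw [← ncard_image_pair_eq_ncard_image hfg,
    ← Set.image_image Prod.snd (fun a => (f a, g a))] at h
  have hinj : Set.InjOn Prod.snd ((fun a => (f a, g a)) '' B) := Set.injOn_of_ncard_image_eq h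
  exact congrArg Prod.fst (hinj (Set.mem_image_of_mem _ ha) (Set.mem_image_of_mem _ hb) hab)

end ImageCard

section Partitions

variable {k l m : ℕ}

def throughPts (p : PP k l) : Set (Fin k) := {a | ∃ b, p.r (Sum.inl a) (Sum.inr b)}

lemma mem_throughPts_of_rel {p : PP k l} {a b : Fin k} (ha : a ∈ throughPts p)
    (hab : p.r (Sum.inl a) (Sum.inl b)) : b ∈ throughPts p :=
  let ⟨c, hc⟩ := ha
  ⟨c, p.iseqv.trans (p.iseqv.symm hab) hc⟩

lemma tP_eq_ncard_image (p : PP k l) :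
    tP p = ((Quotient.mk p ∘ Sum.inl) '' throughPts p).ncard := by
  rw [tP, ← Nat.card_coe_set_eq]
  congr
  ext c
  constructor
  · rintro ⟨⟨a, rfl⟩, ⟨b, hb⟩⟩
    exact ⟨a, ⟨b, Quotient.exact hb.symm⟩, rfl⟩
  · rintro ⟨a, ⟨b, hb⟩, rfl⟩
    exact ⟨⟨a, rfl⟩, ⟨b, (Quotient.sound hb).symm⟩⟩

instance (q : PP k l) (p : PP l m) : Std.Symm (midRel q p) where
  symm := by
    rintro x y (⟨a, b, h, rfl, rfl⟩ | ⟨a, b, h, rfl, rfl⟩)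
    · exact Or.inl ⟨b, a, q.iseqv.symm h, rfl, rfl⟩
    · exact Or.inr ⟨b, a, p.iseqv.symm h, rfl, rfl⟩

-- A path starting at a lower point of the composite stays in its `p`-block of the lower row
-- until it enters the middle row.
lemma bigS_lower_cases {q : PP k l} {p : PP l m} {d : Fin m} {x : Fin k ⊕ (Fin l ⊕ Fin m)}
    (h : (bigS q p).r (Sum.inr (Sum.inr d)) x) :
    (∃ d', x = Sum.inr (Sum.inr d') ∧ p.r (Sum.inr d) (Sum.inr d')) ∨
      ∃ c, p.r (Sum.inr d) (Sum.inl c) := by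
  change Relation.EqvGen _ _ _ at h
  rw [Relation.EqvGen.eqvGen_eq_reflTransGen] at h
  induction h with
  | refl => exact Or.inl ⟨d, rfl, p.iseqv.refl _⟩
  | tail _ hyz ih =>
    obtain ⟨d', rfl, hd'⟩ | hc := ih
    · rcases hyz with ⟨u, v, -, hu, -⟩ | ⟨u, v, huv, hu, rfl⟩
      · cases u <;> simp at hu
      · obtain rfl := Sum.inr_injective hu
        rcases v with c | d''
        · exact Or.inr ⟨c, p.iseqv.trans hd' huv⟩
        · exact Or.inl ⟨d'', rfl, p.iseqv.trans hd' huv⟩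
    · exact Or.inr hc

lemma compP_rel_inl_inr_of_rel {q : PP k l} {p : PP l m} {a : Fin k} {c : Fin l} {b : Fin m}
    (hq : q.r (Sum.inl a) (Sum.inr c)) (hp : p.r (Sum.inl c) (Sum.inr b)) :
    (compP p q).r (Sum.inl a) (Sum.inr b) :=
  .trans _ _ _ (.rel _ _ (Or.inl ⟨_, _, hq, rfl, rfl⟩))
    (.rel _ _ (Or.inr ⟨_, _, hp, rfl, rfl⟩))

lemma compP_rel_inr_inr_of_rel {q : PP k l} {p : PP l m} {d d' : Fin m}
    (h : p.r (Sum.inr d) (Sum.inr d')) : (compP p q).r (Sum.inr d) (Sum.inr d') :=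
  .rel _ _ (Or.inr ⟨_, _, h, rfl, rfl⟩)

lemma compP_rel_inr_inl {q : PP k l} {p : PP l m} {d : Fin m} {a : Fin k}
    (h : (compP p q).r (Sum.inr d) (Sum.inl a)) : ∃ c, p.r (Sum.inr d) (Sum.inl c) := by
  obtain ⟨_, h, -⟩ | hc := bigS_lower_cases h
  · simp at h
  · exact hc

lemma compP_rel_inr_inr {q : PP k l} {p : PP l m} {d d' : Fin m}
    (h : (compP p q).r (Sum.inr d) (Sum.inr d')) :
    p.r (Sum.inr d) (Sum.inr d') ∨ ∃ c, p.r (Sum.inr d) (Sum.inl c) := by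
  obtain ⟨_, h, hd⟩ | hc := bigS_lower_cases h
  · obtain rfl : d' = _ := by simpa using h
    exact Or.inl hd
  · exact Or.inr hc

lemma rel_swap_iff {p : PP k k} (hs : swapP p = p) (x y : Fin k ⊕ Fin k) :
    p.r x.swap y.swap ↔ p.r x y :=
  Iff.of_eq (congrArg (·.r x y) hs)

namespace isProjective

variable {p q : PP k k}

lemma rel_inl_inr_self (hp : isProjective p) {a b : Fin k}
    (h : p.r (Sum.inl a) (Sum.inr b)) : p.r (Sum.inl a) (Sum.inr a) :=
  hp.2 ▸ compP_rel_inl_inr_of_rel h (p.iseqv.symm ((rel_swap_iff hp.1 _ _).mpr h))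

lemma rel_inl_inr_iff (hp : isProjective p) (a b : Fin k) :
    p.r (Sum.inl a) (Sum.inr b) ↔ a ∈ throughPts p ∧ p.r (Sum.inl a) (Sum.inl b) := by
  refine ⟨fun h => ⟨⟨b, h⟩, ?_⟩, fun ⟨⟨c, hc⟩, hab⟩ => ?_⟩
  · have hbb := hp.rel_inl_inr_self (p.iseqv.symm ((rel_swap_iff hp.1 (.inl a) (.inr b)).mpr h))
    exact p.iseqv.trans h (p.iseqv.symm hbb)
  · exact p.iseqv.trans (hp.rel_inl_inr_self hc) ((rel_swap_iff hp.1 (.inl a) (.inl b)).mpr hab)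

lemma ext (hp : isProjective p) (hq : isProjective q)
    (hU : ∀ a b, p.r (Sum.inl a) (Sum.inl b) ↔ q.r (Sum.inl a) (Sum.inl b))
    (hT : throughPts p = throughPts q) : p = q := by
  have hcross : ∀ a b, p.r (Sum.inl a) (Sum.inr b) ↔ q.r (Sum.inl a) (Sum.inr b) := by
    intro a b
    rw [hp.rel_inl_inr_iff, hq.rel_inl_inr_iff, hT, hU]
  apply Setoid.ext
  rintro (a | a) (b | b)
  · exact hU a b
  · exact hcross a b
  · rw [Setoid.comm' p, Setoid.comm' q]
    exact hcross b a
  · exact (rel_swap_iff hp.1 (.inl a) (.inl b)).trans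
      ((hU a b).trans (rel_swap_iff hq.1 (.inl a) (.inl b)).symm)

end isProjective

end Partitions

section Order

variable {k : ℕ} {p q : PP k k}

lemma rel_inl_inl_of_compP_eq (hsp : swapP p = p) (hsq : swapP q = q) (hle : compP p q = q)
    {a b : Fin k} (h : p.r (Sum.inl a) (Sum.inl b)) : q.r (Sum.inl a) (Sum.inl b) :=
  (rel_swap_iff hsq (.inl a) (.inl b)).mp
    (hle ▸ compP_rel_inr_inr_of_rel ((rel_swap_iff hsp (.inl a) (.inl b)).mpr h))

lemma mk_inl_eq_of_compP_eq (hsp : swapP p = p) (hsq : swapP q = q) (hle : compP p q = q)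
    {a b : Fin k} (h : Quotient.mk p (.inl a) = Quotient.mk p (.inl b)) :
    Quotient.mk q (.inl a) = Quotient.mk q (.inl b) :=
  Quotient.sound (rel_inl_inl_of_compP_eq hsp hsq hle (Quotient.exact h))

lemma throughPts_subset_of_compP_eq (hsp : swapP p = p) (hsq : swapP q = q)
    (hle : compP p q = q) : throughPts q ⊆ throughPts p := by
  rintro a ⟨b, hab⟩
  obtain ⟨c, hc⟩ := compP_rel_inr_inl (hle ▸ (rel_swap_iff hsq (.inl a) (.inr b)).mpr hab)
  exact ⟨c, (rel_swap_iff hsp (.inl a) (.inr c)).mp hc⟩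

lemma rel_inl_inl_or_mem_throughPts_of_compP_eq (hsp : swapP p = p) (hsq : swapP q = q)
    (hle : compP p q = q) {a b : Fin k} (h : q.r (Sum.inl a) (Sum.inl b)) :
    p.r (Sum.inl a) (Sum.inl b) ∨ a ∈ throughPts p := by
  obtain h' | ⟨c, hc⟩ :=
    compP_rel_inr_inr (hle ▸ (rel_swap_iff hsq (.inl a) (.inl b)).mpr h)
  · exact Or.inl ((rel_swap_iff hsp (.inl a) (.inl b)).mp h')
  · exact Or.inr ⟨c, (rel_swap_iff hsp (.inl a) (.inr c)).mp hc⟩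

lemma tP_le_of_compP_eq (hsp : swapP p = p) (hsq : swapP q = q) (hle : compP p q = q) :
    tP q ≤ tP p := by
  rw [tP_eq_ncard_image p, tP_eq_ncard_image q]
  exact ncard_image_le_ncard_image_of_factor (throughPts_subset_of_compP_eq hsp hsq hle)
    fun _ _ _ _ => mk_inl_eq_of_compP_eq hsp hsq hle

lemma eq_of_compP_eq_of_tP_eq (hp : isProjective p) (hq : isProjective q)
    (hle : compP p q = q) (h : tP q = tP p) : p = q := by
  have hTqp := throughPts_subset_of_compP_eq hp.1 hq.1 hle
  have hfactor : ∀ a ∈ throughPts p, ∀ b ∈ throughPts p,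
      Quotient.mk p (.inl a) = Quotient.mk p (.inl b) →
        Quotient.mk q (.inl a) = Quotient.mk q (.inl b) :=
    fun _ _ _ _ => mk_inl_eq_of_compP_eq hp.1 hq.1 hle
  rw [tP_eq_ncard_image p, tP_eq_ncard_image q] at h
  have himage := image_eq_image_of_ncard_image_eq_of_factor hTqp hfactor h
  have hT : throughPts p = throughPts q := by
    refine (hTqp.antisymm fun b hb => ?_).symm
    obtain ⟨a, ha, hab⟩ := himage.symm ▸ Set.mem_image_of_mem _ hb
    exact mem_throughPts_of_rel ha (Quotient.exact hab)
  refine hp.ext hq (fun a b => ⟨rel_inl_inl_of_compP_eq hp.1 hq.1 hle, fun hab => ?_⟩) hT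
  rcases rel_inl_inl_or_mem_throughPts_of_compP_eq hp.1 hq.1 hle hab with hab' | ha
  · exact hab'
  · have hb : b ∈ throughPts p := hT ▸ mem_throughPts_of_rel (hT ▸ ha) hab
    exact Quotient.exact
      (eq_of_ncard_image_eq_of_factor hfactor (himage ▸ h) ha hb (Quotient.sound hab))

end Order

/-- if `q ⪯ p` then `t(q) ≤ t(p)`, with equality iff `p = q`. -/
theorem order_through_block_comparison {k : ℕ} (p q : PP k k)
    (hp : isProjective p) (hq : isProjective q) (hle : compP p q = q) :
    tP q ≤ tP p ∧ (tP q = tP p ↔ p = q) :=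
  ⟨tP_le_of_compP_eq hp.1 hq.1 hle,
    ⟨eq_of_compP_eq_of_tP_eq hp hq hle, fun h => h ▸ rfl⟩⟩
end
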